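/- arXiv:1007.3416 — 8 statements merged into one kernel-verified Lean document; each statement's English description precedes it below -/
import Mathlib

section
/- Let f : ℂ → ℂ be holomorphic. Then the real-valued function U(z) = ln( 8|f'(z)|² / (1+|f(z)|²)² ) satisfies the Liouville equation ΔU + e^U = 0 at every point z of the open set {z ∈ ℂ : f'(z) ≠ 0}. -/
/-!
If a real function `u` has `du = Re (c dz)`, then `c = 2 ∂u` and `Δu = 4 ∂̄∂u = 2 Re ∂̄c`.
Where `f' ≠ 0` we have `U = log 8 + log |f'|² - 2 log (1 + |f|²)`, so
`c = 2 f''/f' - 4 f̄ f' / (1 + |f|²)`. The first term is holomorphic and contributes nothing;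
the Leibniz rule for `∂̄`, with `∂̄ f̄ = conj f'` and `∂̄ f = ∂̄ f' = 0`, gives
`∂̄ (f̄ f' / (1 + |f|²)) = |f'|² / (1 + |f|²)²`. Hence `ΔU = -8 |f'|² / (1 + |f|²)² = -e^U`.
-/

/-- The Euclidean Laplacian on ℝ² ≅ ℂ of a real-valued function:
`Δf = ∂²f/∂x² + ∂²f/∂y²`. -/
noncomputable def planeLaplacian (f : ℂ → ℝ) (z : ℂ) : ℝ :=
  fderiv ℝ (fun w => fderiv ℝ f w 1) z 1 +
    fderiv ℝ (fun w => fderiv ℝ f w Complex.I) z Complex.I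

open Complex ComplexConjugate Filter Topology

noncomputable def reMulCLM (c : ℂ) : ℂ →L[ℝ] ℝ :=
  reCLM ∘L ContinuousLinearMap.mul ℝ ℂ c

@[simp] theorem reMulCLM_apply (c v : ℂ) : reMulCLM c v = (c * v).re := rfl

theorem reMulCLM_sub (c d : ℂ) : reMulCLM (c - d) = reMulCLM c - reMulCLM d := by
  ext v
  simp [sub_mul]

theorem smul_reMulCLM (r : ℝ) (c : ℂ) : r • reMulCLM c = reMulCLM (r * c) := by
  ext v
  simp [mul_assoc]

noncomputable def dbar (c : ℂ → ℂ) (z : ℂ) : ℂ :=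
  (fderiv ℝ c z 1 + I * fderiv ℝ c z I) / 2

section dbar

variable {c d : ℂ → ℂ} {z : ℂ}

theorem dbar_eq_zero (hc : DifferentiableAt ℂ c z) : dbar c z = 0 := by
  have hI : fderiv ℝ c z I = I * fderiv ℝ c z 1 := by
    have hlin := (fderiv ℂ c z).map_smul I 1
    rw [smul_eq_mul, mul_one] at hlin
    rw [hc.fderiv_restrictScalars ℝ, ContinuousLinearMap.coe_restrictScalars', hlin, smul_eq_mul]
  rw [dbar, hI, ← mul_assoc, I_mul_I]
  ring

theorem dbar_add (hc : DifferentiableAt ℝ c z) (hd : DifferentiableAt ℝ d z) :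
    dbar (fun w => c w + d w) z = dbar c z + dbar d z := by
  simp only [dbar, fderiv_fun_add hc hd, add_apply]
  ring

theorem dbar_sub (hc : DifferentiableAt ℝ c z) (hd : DifferentiableAt ℝ d z) :
    dbar (fun w => c w - d w) z = dbar c z - dbar d z := by
  simp only [dbar, fderiv_fun_sub hc hd, sub_apply]
  ring

theorem dbar_mul (hc : DifferentiableAt ℝ c z) (hd : DifferentiableAt ℝ d z) :
    dbar (fun w => c w * d w) z = dbar c z * d z + c z * dbar d z := by
  simp only [dbar, fderiv_fun_mul hc hd, add_apply, smul_apply, smul_eq_mul]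
  ring

theorem dbar_const_mul (a : ℂ) (hc : DifferentiableAt ℝ c z) :
    dbar (fun w => a * c w) z = a * dbar c z := by
  rw [dbar_mul (differentiableAt_const a) hc, dbar_eq_zero (differentiableAt_const a)]
  ring

theorem dbar_inv (hc : DifferentiableAt ℝ c z) (hz : c z ≠ 0) :
    dbar (fun w => (c w)⁻¹) z = -dbar c z / c z ^ 2 := by
  have hinv : HasFDerivAt (fun w => (c w)⁻¹) _ z :=
    (hasFDerivAt_inv' (𝕜 := ℝ) hz).comp z hc.hasFDerivAt
  rw [dbar, dbar, hinv.fderiv]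
  simp only [ContinuousLinearMap.neg_comp, neg_apply, ContinuousLinearMap.comp_apply,
    ContinuousLinearMap.mulLeftRight_apply]
  field_simp
  ring

theorem dbar_conj (hc : DifferentiableAt ℂ c z) :
    dbar (fun w => conj (c w)) z = conj (deriv c z) := by
  have hconj : HasFDerivAt (fun w => conj (c w)) _ z :=
    (hc.hasDerivAt.hasFDerivAt.restrictScalars ℝ).star
  rw [dbar, hconj.fderiv]
  simp only [ContinuousLinearMap.comp_apply, ContinuousLinearMap.coe_restrictScalars',
    ContinuousLinearMap.toSpanSingleton_apply, smul_eq_mul, one_mul,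
    ContinuousLinearEquiv.coe_coe, starL'_apply, Complex.star_def, map_mul, conj_I]
  linear_combination (-conj (deriv c z) / 2) * I_sq

end dbar

theorem planeLaplacian_eq_two_mul_re_dbar {u : ℂ → ℝ} {c : ℂ → ℂ} {z : ℂ}
    (hu : ∀ᶠ w in 𝓝 z, HasFDerivAt u (reMulCLM (c w)) w) (hc : DifferentiableAt ℝ c z) :
    planeLaplacian u z = 2 * (dbar c z).re := by
  have hsecond : ∀ v, fderiv ℝ (fun w => fderiv ℝ u w v) z v = (fderiv ℝ c z v * v).re := by
    intro v
    have hev : (fun w => fderiv ℝ u w v) =ᶠ[𝓝 z] fun w => (c w * v).re :=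
      hu.mono fun w hw => by simp only [hw.fderiv, reMulCLM_apply]
    have hre : HasFDerivAt (fun w => (c w * v).re) _ z :=
      reCLM.hasFDerivAt.comp z (hc.hasFDerivAt.mul_const v)
    rw [hev.fderiv_eq, hre.fderiv]
    simp [mul_comm]
  rw [planeLaplacian, hsecond, hsecond, dbar]
  simp only [mul_one, mul_re, I_re, mul_zero, I_im, zero_sub, div_ofNat_re, add_re, zero_mul, one_mul]
  ring

section gradient

variable {h : ℂ → ℂ} {w : ℂ}

theorem hasFDerivAt_norm_sq_comp (hh : DifferentiableAt ℂ h w) :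
    HasFDerivAt (fun u => ‖h u‖ ^ 2) (reMulCLM (2 * conj (h w) * deriv h w)) w := by
  refine (hh.hasDerivAt.hasFDerivAt.restrictScalars ℝ).norm_sq.congr_fderiv ?_
  ext v
  simp only [reMulCLM_apply, smul_apply, ContinuousLinearMap.comp_apply, coe_innerSL_apply,
    ContinuousLinearMap.coe_restrictScalars', ContinuousLinearMap.toSpanSingleton_apply,
    smul_eq_mul, Complex.inner, nsmul_eq_mul]
  rw [Nat.cast_ofNat, ← re_ofReal_mul]
  push_cast
  ring_nf

theorem hasFDerivAt_log_norm_sq_comp (hh : DifferentiableAt ℂ h w) (h0 : h w ≠ 0) :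
    HasFDerivAt (fun u => Real.log (‖h u‖ ^ 2)) (reMulCLM (2 * deriv h w / h w)) w := by
  refine ((hasFDerivAt_norm_sq_comp hh).log (by positivity)).congr_fderiv ?_
  rw [smul_reMulCLM]
  congr 1
  push_cast
  rw [← conj_mul']
  have : conj (h w) ≠ 0 := (map_ne_zero _).mpr h0
  field_simp

theorem hasFDerivAt_log_one_add_norm_sq_comp (hh : DifferentiableAt ℂ h w) :
    HasFDerivAt (fun u => Real.log (1 + ‖h u‖ ^ 2))
      (reMulCLM (2 * conj (h w) * deriv h w * (1 + conj (h w) * h w)⁻¹)) w := by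
  refine (((hasFDerivAt_norm_sq_comp hh).const_add 1).log (by positivity)).congr_fderiv ?_
  rw [smul_reMulCLM]
  congr 1
  push_cast
  rw [conj_mul']
  field_simp

end gradient

theorem one_add_conj_mul_self_ne_zero (a : ℂ) : 1 + conj a * a ≠ 0 := by
  rw [conj_mul']
  exact_mod_cast (by positivity : (1 + ‖a‖ ^ 2 : ℝ) ≠ 0)

theorem dbar_conj_mul_deriv_mul_inv_one_add_conj_mul {h : ℂ → ℂ} {z : ℂ}
    (hh : DifferentiableAt ℂ h z) (hh' : DifferentiableAt ℂ (deriv h) z) :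
    dbar (fun w => conj (h w) * deriv h w * (1 + conj (h w) * h w)⁻¹) z =
      ‖deriv h z‖ ^ 2 / (1 + ‖h z‖ ^ 2) ^ 2 := by
  have hs := one_add_conj_mul_self_ne_zero (h z)
  have hconj : DifferentiableAt ℝ (fun w => conj (h w)) z := by fun_prop
  have hdenom : dbar (fun w => 1 + conj (h w) * h w) z = conj (deriv h z) * h z := by
    rw [dbar_add (c := fun _ => 1) (by fun_prop) (by fun_prop), dbar_mul hconj (by fun_prop),
      dbar_conj hh, dbar_eq_zero hh, dbar_eq_zero (differentiableAt_const 1)]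
    ring
  rw [dbar_mul (c := fun w => conj (h w) * deriv h w) (by fun_prop) (by fun_prop),
    dbar_mul hconj (by fun_prop), dbar_inv (c := fun w => 1 + conj (h w) * h w) (by fun_prop) hs,
    hdenom, dbar_conj hh, dbar_eq_zero hh']
  rw [conj_mul'] at hs
  simp only [conj_mul', mul_zero, add_zero]
  field_simp
  linear_combination -(conj (deriv h z) * deriv h z) * conj_mul' (h z) -
    (‖h z‖ : ℂ) ^ 2 * conj_mul' (deriv h z)

theorem hasFDerivAt_log_mul_norm_sq_deriv_div {f : ℂ → ℂ} {w : ℂ} {a : ℝ} (ha : 0 < a)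
    (hf : DifferentiableAt ℂ f w) (hf' : DifferentiableAt ℂ (deriv f) w) (h0 : deriv f w ≠ 0) :
    HasFDerivAt (fun u => Real.log (a * ‖deriv f u‖ ^ 2 / (1 + ‖f u‖ ^ 2) ^ 2))
      (reMulCLM (2 * deriv (deriv f) w / deriv f w -
        4 * (conj (f w) * deriv f w * (1 + conj (f w) * f w)⁻¹))) w := by
  have hsplit : (fun u => Real.log (a * ‖deriv f u‖ ^ 2 / (1 + ‖f u‖ ^ 2) ^ 2)) =ᶠ[𝓝 w]
      fun u => Real.log a + Real.log (‖deriv f u‖ ^ 2) - 2 * Real.log (1 + ‖f u‖ ^ 2) := by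
    filter_upwards [hf'.continuousAt.eventually_ne h0] with u hu
    rw [Real.log_div (by positivity) (by positivity), Real.log_mul ha.ne' (by positivity),
      Real.log_pow (1 + _) 2]
    push_cast
    ring
  refine HasFDerivAt.congr_of_eventuallyEq ?_ hsplit
  refine (((hasFDerivAt_log_norm_sq_comp hf' h0).const_add _).sub
    ((hasFDerivAt_log_one_add_norm_sq_comp hf).const_mul 2)).congr_fderiv ?_
  rw [smul_reMulCLM, ← reMulCLM_sub]
  congr 1
  push_cast
  ring

/-- **Liouville's formula.** If `f` is holomorphic on `ℂ`, then
`U(z) = ln(8|f'(z)|²/(1+|f(z)|²)²)` solves `ΔU + e^U = 0` wherever `f'(z) ≠ 0`. -/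
theorem liouville_formula (f : ℂ → ℂ) (hf : Differentiable ℂ f)
    (U : ℂ → ℝ)
    (hU : ∀ z, U z =
      Real.log (8 * ‖deriv f z‖ ^ 2 / (1 + ‖f z‖ ^ 2) ^ 2)) :
    ∀ z : ℂ, deriv f z ≠ 0 → planeLaplacian U z + Real.exp (U z) = 0 := by
  intro z hz
  have hf' : Differentiable ℂ (deriv f) := hf.deriv
  have hgrad : ∀ᶠ w in 𝓝 z, HasFDerivAt U (reMulCLM (2 * deriv (deriv f) w / deriv f w -
      4 * (conj (f w) * deriv f w * (1 + conj (f w) * f w)⁻¹))) w :=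
    (hf'.continuous.continuousAt.eventually_ne hz).mono fun w hw => funext hU ▸
      hasFDerivAt_log_mul_norm_sq_deriv_div (by norm_num) (hf w) (hf' w) hw
  have hlogDeriv : DifferentiableAt ℂ (fun w => 2 * deriv (deriv f) w / deriv f w) z := by
    fun_prop (disch := exact hz)
  have hpullback : DifferentiableAt ℝ
      (fun w => conj (f w) * deriv f w * (1 + conj (f w) * f w)⁻¹) z := by
    have hfz := hf z
    have hf'z := hf' z
    fun_prop (disch := exact one_add_conj_mul_self_ne_zero (f z))
  rw [planeLaplacian_eq_two_mul_re_dbar hgrad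
      ((hlogDeriv.restrictScalars ℝ).sub (hpullback.const_mul 4)),
    dbar_sub (hlogDeriv.restrictScalars ℝ) (hpullback.const_mul 4),
    dbar_eq_zero hlogDeriv, dbar_const_mul 4 hpullback,
    dbar_conj_mul_deriv_mul_inv_one_add_conj_mul (hf z) (hf' z), hU, Real.exp_log (by positivity)]
  norm_cast
  ring
end

section
/- Let N ∈ ℕ and let f : ℂ → ℂ be holomorphic such that f' has a zero of multiplicity exactly N at the origin (i.e. f'(z) = z^N g(z) with g holomorphic and g(0) ≠ 0). Then the function U(z) = ln( 8|f'(z)|² / (1+|f(z)|²)² ) − ln |z|^{2N} satisfies the singular Liouville equation ΔU + |z|^{2N} e^U = 0 at every point of the set {z ∈ ℂ \ {0} : f'(z) ≠ 0}. -/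
/-!
Off `0` and the zeros of `f'` one has
`U = log (8 |h|² / (1 + |f|²)²) = log 8 + 2 log |h| - 2 log (1 + |f|²)` with `h = f'/z^N`
holomorphic and nonvanishing, so `log |h|` is harmonic. Writing the differential of
`log (1 + |f|²)` as `c ↦ Re (H c)` with `H = 2 f̄ f' / (1 + |f|²)`, its Laplacian is twice the real
part of `∂H/∂z̄ = 2 |f'|² / (1 + |f|²)²`. Hence `ΔU = -8 |f'|² / (1 + |f|²)² = -|z|^{2N} e^U`.
-/

open Complex Filter Topology ComplexConjugate Laplacian InnerProductSpace

theorem Filter.EventuallyEq.planeLaplacian_eq {u v : ℂ → ℝ} {z : ℂ} (h : u =ᶠ[𝓝 z] v) :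
    planeLaplacian u z = planeLaplacian v z := by
  have hc : ∀ c, (fun w => fderiv ℝ u w c) =ᶠ[𝓝 z] fun w => fderiv ℝ v w c := fun c =>
    (h.fderiv (𝕜 := ℝ)).fun_comp (· c)
  rw [planeLaplacian, planeLaplacian, (hc 1).fderiv_eq, (hc I).fderiv_eq]

theorem ContDiffAt.planeLaplacian_eq_laplacian {u : ℂ → ℝ} {z : ℂ} (hu : ContDiffAt ℝ 2 u z) :
    planeLaplacian u z = Δ u z := by
  have hd : DifferentiableAt ℝ (fderiv ℝ u) z :=
    (hu.fderiv_right (m := 1) (by norm_num)).differentiableAt one_ne_zero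
  simp [planeLaplacian, laplacian_eq_iteratedFDeriv_complexPlane, iteratedFDeriv_two_apply,
    fderiv_clm_apply hd (differentiableAt_const _)]

/-- If `H' c = A c + B c̄`, the right-hand side is `2 B.re`: only the `∂/∂z̄` part of `H` counts. -/
theorem planeLaplacian_eq_of_fderiv_eq_re_mul {u : ℂ → ℝ} {H : ℂ → ℂ} {H' : ℂ →L[ℝ] ℂ} {z : ℂ}
    (hu : ∀ᶠ w in 𝓝 z, ∀ c, fderiv ℝ u w c = (H w * c).re) (hH : HasFDerivAt H H' z) :
    planeLaplacian u z = (H' 1).re - (H' I).im := by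
  have h1 : (fun w => fderiv ℝ u w 1) =ᶠ[𝓝 z] fun w => reCLM (H w) := by
    filter_upwards [hu] with w hw using by simp [hw]
  have hI : (fun w => fderiv ℝ u w I) =ᶠ[𝓝 z] fun w => -imCLM (H w) := by
    filter_upwards [hu] with w hw using by simp [hw]
  have hre : HasFDerivAt (fun w => reCLM (H w)) (reCLM.comp H') z := reCLM.hasFDerivAt.comp z hH
  have him : HasFDerivAt (fun w => -imCLM (H w)) (-imCLM.comp H') z :=
    (imCLM.hasFDerivAt.comp z hH).neg
  rw [planeLaplacian, h1.fderiv_eq, hI.fderiv_eq, hre.fderiv, him.fderiv]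
  simp [sub_eq_add_neg]

theorem HasDerivAt.fderiv_log_one_add_sq_norm_apply {f : ℂ → ℂ} {a w : ℂ} (hf : HasDerivAt f a w)
    (c : ℂ) :
    fderiv ℝ (fun x => Real.log (1 + ‖f x‖ ^ 2)) w c =
      2 / (1 + ‖f w‖ ^ 2) * (conj (f w) * a * c).re := by
  have hψ : (1 : ℝ) + ‖f w‖ ^ 2 ≠ 0 := by positivity
  rw [(((hf.hasFDerivAt.restrictScalars ℝ).norm_sq.const_add 1).log hψ).fderiv]
  simp [Complex.inner]
  ring

theorem AnalyticAt.contDiffAt_log_one_add_sq_norm {f : ℂ → ℂ} {z : ℂ} {n : WithTop ℕ∞}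
    (hf : AnalyticAt ℂ f z) : ContDiffAt ℝ n (fun w => Real.log (1 + ‖f w‖ ^ 2)) z :=
  (contDiffAt_const.add ((contDiff_norm_sq ℝ).contDiffAt.comp z
    (hf.contDiffAt.restrict_scalars ℝ))).log (by positivity : (1 : ℝ) + ‖f z‖ ^ 2 ≠ 0)

theorem AnalyticAt.laplacian_log_one_add_sq_norm {f : ℂ → ℂ} {z : ℂ} (hf : AnalyticAt ℂ f z) :
    Δ (fun w => Real.log (1 + ‖f w‖ ^ 2)) z = 4 * ‖deriv f z‖ ^ 2 / (1 + ‖f z‖ ^ 2) ^ 2 := by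
  have hgrad : ∀ᶠ w in 𝓝 z, ∀ c, fderiv ℝ (fun x => Real.log (1 + ‖f x‖ ^ 2)) w c =
      ((2 / (1 + ‖f w‖ ^ 2)) • (conj (f w) * deriv f w) * c).re := by
    filter_upwards [hf.eventually_analyticAt] with w hw c
    rw [hw.differentiableAt.hasDerivAt.fderiv_log_one_add_sq_norm_apply, smul_mul_assoc,
      Complex.smul_re, smul_eq_mul]
  have hfz := hf.differentiableAt.hasDerivAt.hasFDerivAt.restrictScalars ℝ
  have hdfz := hf.deriv.differentiableAt.hasDerivAt.hasFDerivAt.restrictScalars ℝ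
  have hρ : HasFDerivAt (fun w => 2 / (1 + ‖f w‖ ^ 2)) _ z :=
    ((hasDerivAt_const _ (2 : ℝ)).div (hasDerivAt_id _)
      (by positivity : (1 : ℝ) + ‖f z‖ ^ 2 ≠ 0)).comp_hasFDerivAt z
      (hfz.norm_sq.const_add 1)
  rw [← hf.contDiffAt_log_one_add_sq_norm.planeLaplacian_eq_laplacian,
    planeLaplacian_eq_of_fderiv_eq_re_mul hgrad (hρ.smul (hfz.star.mul hdfz))]
  simp only [RCLike.star_def, id_eq, smul_add, mul_one, one_mul, add_apply, smul_apply,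
    ContinuousLinearMap.coe_restrictScalars', ContinuousLinearMap.toSpanSingleton_apply,
    smul_eq_mul, ContinuousLinearMap.comp_apply, ContinuousLinearEquiv.coe_coe, starL'_apply,
    ContinuousLinearMap.smulRight_apply, coe_innerSL_apply, Complex.inner, mul_re, conj_re,
    conj_im, nsmul_eq_mul, add_re, smul_re, star_mul', conj_I, I_re, I_im, mul_im, add_im,
    smul_im, neg_im, Complex.sq_norm, Complex.normSq_apply]
  field_simp
  ring

theorem AnalyticAt.planeLaplacian_log_mul_sq_norm_div {f h : ℂ → ℂ} {z : ℂ}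
    (hf : AnalyticAt ℂ f z) (hh : AnalyticAt ℂ h z) (hhz : h z ≠ 0) :
    planeLaplacian (fun w => Real.log (8 * ‖h w‖ ^ 2 / (1 + ‖f w‖ ^ 2) ^ 2)) z =
      -(8 * ‖deriv f z‖ ^ 2 / (1 + ‖f z‖ ^ 2) ^ 2) := by
  set φ : ℂ → ℝ := fun w => Real.log (1 + ‖f w‖ ^ 2)
  have hharm : HarmonicAt (fun w => Real.log 8 + 2 * Real.log ‖h w‖) z :=
    (harmonicAt_const _).add ((hh.harmonicAt_log_norm hhz).const_smul (c := 2))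
  have h2φ : ContDiffAt ℝ 2 ((2 : ℝ) • φ) z := hf.contDiffAt_log_one_add_sq_norm.const_smul (2 : ℝ)
  have hsum : ContDiffAt ℝ 2 ((fun w => Real.log 8 + 2 * Real.log ‖h w‖) - (2 : ℝ) • φ) z :=
    hharm.1.sub h2φ
  have hsplit : (fun w => Real.log (8 * ‖h w‖ ^ 2 / (1 + ‖f w‖ ^ 2) ^ 2)) =ᶠ[𝓝 z]
      (fun w => Real.log 8 + 2 * Real.log ‖h w‖) - (2 : ℝ) • φ := by
    filter_upwards [hh.continuousAt.eventually_ne hhz] with w hw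
    simp only [φ, Pi.sub_apply, Pi.smul_apply, smul_eq_mul]
    rw [Real.log_div (by positivity) (by positivity), Real.log_mul (by norm_num) (by positivity),
      Real.log_pow, Real.log_pow]
    push_cast
    ring
  rw [hsplit.planeLaplacian_eq, hsum.planeLaplacian_eq_laplacian, hharm.1.laplacian_sub h2φ,
    hharm.2.eq_of_nhds, laplacian_smul _ hf.contDiffAt_log_one_add_sq_norm,
    hf.laplacian_log_one_add_sq_norm]
  simp only [Pi.zero_apply, smul_eq_mul, zero_sub]
  ring

theorem singular_liouville_formula_general (N : ℕ) (f : ℂ → ℂ)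
    (hf : Differentiable ℂ f)
    (U : ℂ → ℝ)
    (hU : ∀ z : ℂ, U z =
      Real.log (8 * ‖deriv f z‖ ^ 2 / (1 + ‖f z‖ ^ 2) ^ 2) -
        Real.log (‖z‖ ^ (2 * N))) :
    ∀ z : ℂ, z ≠ 0 → deriv f z ≠ 0 →
      planeLaplacian U z + ‖z‖ ^ (2 * N) * Real.exp (U z) = 0 := by
  intro z hz hfz
  have hfa := hf.analyticAt z
  have hUV : U =ᶠ[𝓝 z]
      fun w => Real.log (8 * ‖deriv f w / w ^ N‖ ^ 2 / (1 + ‖f w‖ ^ 2) ^ 2) := by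
    filter_upwards [eventually_ne_nhds hz, hfa.deriv.continuousAt.eventually_ne hfz] with w hw hfw
    rw [hU w, ← Real.log_div (by positivity) (by positivity), norm_div, norm_pow]
    congr 1
    field_simp
    ring
  have hexp : ‖z‖ ^ (2 * N) * Real.exp (U z) = 8 * ‖deriv f z‖ ^ 2 / (1 + ‖f z‖ ^ 2) ^ 2 := by
    rw [hU z, Real.exp_sub, Real.exp_log (by positivity), Real.exp_log (by positivity)]
    field_simp
  have hh : AnalyticAt ℂ (fun w => deriv f w / w ^ N) z :=
    hfa.deriv.div (analyticAt_id.pow N) (pow_ne_zero N hz)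
  rw [hUV.planeLaplacian_eq,
    hfa.planeLaplacian_log_mul_sq_norm_div hh (div_ne_zero hfz (pow_ne_zero N hz)), hexp,
    neg_add_cancel]

/-- **Singular Liouville formula.** If `f` is holomorphic and `f'` has a zero of
multiplicity exactly `N` at the origin, then
`U(z) = ln(8|f'(z)|²/(1+|f(z)|²)²) - ln |z|^{2N}` solves `ΔU + |z|^{2N} e^U = 0`
on `{z ≠ 0 : f'(z) ≠ 0}`. -/
theorem singular_liouville_formula (N : ℕ) (f g : ℂ → ℂ)
    (hf : Differentiable ℂ f) (hg : Differentiable ℂ g) (hg0 : g 0 ≠ 0)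
    (hfg : ∀ z : ℂ, deriv f z = z ^ N * g z)
    (U : ℂ → ℝ)
    (hU : ∀ z : ℂ, U z =
      Real.log (8 * ‖deriv f z‖ ^ 2 / (1 + ‖f z‖ ^ 2) ^ 2) -
        Real.log (‖z‖ ^ (2 * N))) :
    ∀ z : ℂ, z ≠ 0 → deriv f z ≠ 0 →
      planeLaplacian U z + ‖z‖ ^ (2 * N) * Real.exp (U z) = 0 :=
  singular_liouville_formula_general N f hf U hU
end

section
/- Let c ∈ ℂ, N ∈ ℕ and k ∈ ℕ. The complex-valued function φ_k(z) = z^k ( (N+1+k)/(N+1) − 2 z^{N+1} \overline{(z^{N+1}−c)} / (1+|z^{N+1}−c|²) ) satisfies Δφ_k + V φ_k = 0 on all of ℂ, where V(z) = 8(N+1)²|z|^{2N}/(1+|z^{N+1}−c|²)². In particular both Re φ_k and Im φ_k are real-valued solutions of Δφ + Vφ = 0 on ℂ. -/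
/-- The Euclidean Laplacian on ℝ² ≅ ℂ of a complex-valued function,
applied componentwise. -/
noncomputable def planeLaplacianC (f : ℂ → ℂ) (z : ℂ) : ℂ :=
  fderiv ℝ (fun w => fderiv ℝ f w 1) z 1 +
    fderiv ℝ (fun w => fderiv ℝ f w Complex.I) z Complex.I

/-!
Write `w = z^{N+1} - c` and `D = 1 + |w|²`. In Wirtinger calculus, `∂̄` kills `z^k` and
`z^{N+1}`, and `∂̄(w̄ / D) = (N+1) z̄^N (D - |w|²) / D² = (N+1) z̄^N / D²`, so
`∂̄φ_k = -2(N+1) z^{k+N+1} z̄^N / D²`. Since `Δ = 4∂∂̄` on `C²` functions and `∂D = (N+1) z^N w̄`,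
`Δφ_k = -8(N+1) z̄^N ((k+N+1) z^{k+N} D - 2(N+1) z^{k+2N+1} w̄) / D³`, which is exactly `-V φ_k`.
As `V` is real and `Δ` commutes with `ℝ`-linear maps, the real and imaginary parts solve the same
equation.
-/

open Complex ComplexConjugate Filter Topology

noncomputable def wirtingerCLM (a b : ℂ) : ℂ →L[ℝ] ℂ :=
  a • ContinuousLinearMap.id ℝ ℂ + b • conjCLE.toContinuousLinearMap

@[simp]
lemma wirtingerCLM_apply (a b h : ℂ) : wirtingerCLM a b h = a * h + b * conj h := by
  simp [wirtingerCLM]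

/-- `f` is real differentiable at `z` with derivative `h ↦ a h + b h̄`, i.e. with Wirtinger
derivatives `∂f(z) = a` and `∂̄f(z) = b`. -/
def HasWirtingerDerivAt (f : ℂ → ℂ) (a b z : ℂ) : Prop :=
  HasFDerivAt f (wirtingerCLM a b) z

namespace HasWirtingerDerivAt

variable {f g : ℂ → ℂ} {a b a' b' z : ℂ}

lemma of_hasFDerivAt {L : ℂ →L[ℝ] ℂ} (hf : HasFDerivAt f L z)
    (hL : ∀ h, L h = a * h + b * conj h) : HasWirtingerDerivAt f a b z := by
  unfold HasWirtingerDerivAt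
  convert hf using 1
  exact ContinuousLinearMap.ext fun h => by simp [hL]

lemma congr_deriv (hf : HasWirtingerDerivAt f a b z) (ha : a = a') (hb : b = b') :
    HasWirtingerDerivAt f a' b' z :=
  ha ▸ hb ▸ hf

lemma of_hasDerivAt (hf : HasDerivAt f a z) : HasWirtingerDerivAt f a 0 z :=
  of_hasFDerivAt (hf.hasFDerivAt.restrictScalars ℝ) fun h => by simp [mul_comm]

lemma star (hf : HasWirtingerDerivAt f a b z) :
    HasWirtingerDerivAt (fun w => conj (f w)) (conj b) (conj a) z :=
  of_hasFDerivAt (conjCLE.toContinuousLinearMap.hasFDerivAt.comp z hf) fun h => by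
    simp only [ContinuousLinearMap.comp_apply, wirtingerCLM_apply, ContinuousLinearEquiv.coe_coe,
      ContinuousAlgEquiv.coeCLE_apply, conjCAE_apply, map_add, map_mul,
      RingHomCompTriple.comp_apply, RingHom.id_apply]
    ring

lemma add (hf : HasWirtingerDerivAt f a b z) (hg : HasWirtingerDerivAt g a' b' z) :
    HasWirtingerDerivAt (fun w => f w + g w) (a + a') (b + b') z :=
  of_hasFDerivAt (HasFDerivAt.add hf hg) fun h => by
    simp only [add_apply, wirtingerCLM_apply]; ring

lemma sub (hf : HasWirtingerDerivAt f a b z) (hg : HasWirtingerDerivAt g a' b' z) :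
    HasWirtingerDerivAt (fun w => f w - g w) (a - a') (b - b') z :=
  of_hasFDerivAt (HasFDerivAt.sub hf hg) fun h => by
    simp only [sub_apply, wirtingerCLM_apply]; ring

lemma mul (hf : HasWirtingerDerivAt f a b z) (hg : HasWirtingerDerivAt g a' b' z) :
    HasWirtingerDerivAt (fun w => f w * g w) (f z * a' + g z * a) (f z * b' + g z * b) z :=
  of_hasFDerivAt (HasFDerivAt.mul (𝕜 := ℝ) hf hg) fun h => by
    simp only [add_apply, smul_apply, wirtingerCLM_apply, smul_eq_mul]; ring

lemma const_mul (c : ℂ) (hf : HasWirtingerDerivAt f a b z) :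
    HasWirtingerDerivAt (fun w => c * f w) (c * a) (c * b) z :=
  ((of_hasDerivAt (hasDerivAt_const z c)).mul hf).congr_deriv (by ring) (by ring)

lemma pow (hf : HasWirtingerDerivAt f a b z) (n : ℕ) :
    HasWirtingerDerivAt (fun w => f w ^ n) (n * f z ^ (n - 1) * a) (n * f z ^ (n - 1) * b) z :=
  of_hasFDerivAt (HasFDerivAt.pow hf n) fun h => by
    simp only [nsmul_eq_mul, smul_apply, wirtingerCLM_apply, smul_eq_mul]; ring

lemma inv (hf : HasWirtingerDerivAt f a b z) (hz : f z ≠ 0) :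
    HasWirtingerDerivAt (fun w => (f w)⁻¹) (-(a / f z ^ 2)) (-(b / f z ^ 2)) z :=
  of_hasFDerivAt ((hasFDerivAt_inv' (𝕜 := ℝ) hz).comp z hf) fun h => by
    simp only [ContinuousLinearMap.neg_comp, neg_apply, ContinuousLinearMap.comp_apply,
      wirtingerCLM_apply, ContinuousLinearMap.mulLeftRight_apply, neg_mul]
    field_simp
    ring

lemma div (hf : HasWirtingerDerivAt f a b z) (hg : HasWirtingerDerivAt g a' b' z)
    (hz : g z ≠ 0) :
    HasWirtingerDerivAt (fun w => f w / g w) ((a * g z - f z * a') / g z ^ 2)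
      ((b * g z - f z * b') / g z ^ 2) z := by
  simp only [div_eq_mul_inv]
  refine (hf.mul (hg.inv hz)).congr_deriv ?_ ?_ <;> field_simp <;> ring

lemma ofReal_norm_sq (hf : HasWirtingerDerivAt f a b z) :
    HasWirtingerDerivAt (fun w => ((‖f w‖ ^ 2 : ℝ) : ℂ))
      (conj (f z) * a + f z * conj b) (conj (f z) * b + f z * conj a) z := by
  have hsq : (fun w => ((‖f w‖ ^ 2 : ℝ) : ℂ)) = fun w => f w * conj (f w) := by
    ext w
    rw [mul_conj, normSq_eq_norm_sq]
  rw [hsq]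
  exact (hf.mul hf.star).congr_deriv (by ring) (by ring)

lemma fderiv_one_add_I_mul_fderiv_I (hf : HasWirtingerDerivAt f a b z) :
    fderiv ℝ f z 1 + I * fderiv ℝ f z I = 2 * b := by
  rw [HasFDerivAt.fderiv hf]
  simp only [wirtingerCLM_apply, conj_I, map_one]
  linear_combination (a - b) * I_mul_I

end HasWirtingerDerivAt

section Laplacian

variable {f : ℂ → ℂ} {z : ℂ}

lemma fderiv_fderiv_apply (hf : DifferentiableAt ℝ (fderiv ℝ f) z) (u v : ℂ) :
    fderiv ℝ (fun w => fderiv ℝ f w v) z u = fderiv ℝ (fderiv ℝ f) z u v := by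
  rw [fderiv_clm_apply hf (differentiableAt_const v)]
  simp

lemma ContDiffAt.differentiableAt_fderiv_apply (hf : ContDiffAt ℝ 2 f z) (v : ℂ) :
    DifferentiableAt ℝ (fun w => fderiv ℝ f w v) z :=
  ((hf.fderiv_right (m := 1) le_rfl).differentiableAt one_ne_zero).clm_apply
    (differentiableAt_const v)

/-- `Δ = 4 ∂∂̄`: the mixed second derivatives of a `C²` function agree. -/
theorem planeLaplacianC_eq_four_mul_of_hasWirtingerDerivAt {b : ℂ → ℂ} {b₁ b₂ : ℂ}
    (hf : ContDiffAt ℝ 2 f z)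
    (hfb : ∀ᶠ w in 𝓝 z, ∃ a, HasWirtingerDerivAt f a (b w) w)
    (hb : HasWirtingerDerivAt b b₁ b₂ z) :
    planeLaplacianC f z = 4 * b₁ := by
  unfold planeLaplacianC
  set g : ℂ → ℂ → ℂ := fun v w => fderiv ℝ f w v
  have hg := hf.differentiableAt_fderiv_apply
  have hgb : (fun w => g 1 w + I * g I w) =ᶠ[𝓝 z] fun w => 2 * b w :=
    hfb.mono fun w ⟨_, ha⟩ => ha.fderiv_one_add_I_mul_fderiv_I
  have hD : fderiv ℝ (g 1) z + I • fderiv ℝ (g I) z = wirtingerCLM (2 * b₁) (2 * b₂) :=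
    have hsum : HasFDerivAt (fun w => g 1 w + I * g I w)
        (fderiv ℝ (g 1) z + I • fderiv ℝ (g I) z) z :=
      (hg 1).hasFDerivAt.add ((hg I).hasFDerivAt.const_mul I)
    hsum.unique ((hb.const_mul 2).congr_of_eventuallyEq hgb)
  have hsymm : fderiv ℝ (g I) z 1 = fderiv ℝ (g 1) z I := by
    simp only [g, fderiv_fderiv_apply ((hf.fderiv_right (m := 1) le_rfl).differentiableAt
      one_ne_zero)]
    exact (hf.isSymmSndFDerivAt (by simp)).eq 1 I
  have h1 := congr($hD 1)
  have hI := congr($hD I)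
  simp only [add_apply, smul_apply, smul_eq_mul, wirtingerCLM_apply, mul_one, map_one, conj_I,
    mul_neg] at h1 hI
  linear_combination h1 - I * hI - I * hsymm + (fderiv ℝ (g I) z I - 2 * b₁ + 2 * b₂) * I_mul_I

theorem planeLaplacian_clm_comp (T : ℂ →L[ℝ] ℝ) (hf : ContDiffAt ℝ 2 f z) :
    planeLaplacian (fun w => T (f w)) z = T (planeLaplacianC f z) := by
  have hcomp (v : ℂ) :
      (fun w => fderiv ℝ (fun w => T (f w)) w v) =ᶠ[𝓝 z] fun w => T (fderiv ℝ f w v) :=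
    (hf.eventually (by simp)).mono fun w hw => by
      have hTf : HasFDerivAt (fun w => T (f w)) (T.comp (fderiv ℝ f w)) w :=
        T.hasFDerivAt.comp w (hw.differentiableAt two_ne_zero).hasFDerivAt
      show fderiv ℝ (fun w => T (f w)) w v = T (fderiv ℝ f w v)
      rw [hTf.fderiv]
      rfl
  have hT (u v : ℂ) :
      fderiv ℝ (fun w => T (fderiv ℝ f w v)) z u = T (fderiv ℝ (fun w => fderiv ℝ f w v) z u) := by
    have hTg : HasFDerivAt (fun w => T (fderiv ℝ f w v))
        (T.comp (fderiv ℝ (fun w => fderiv ℝ f w v) z)) z :=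
      T.hasFDerivAt.comp z (hf.differentiableAt_fderiv_apply v).hasFDerivAt
    rw [hTg.fderiv]
    rfl
  unfold planeLaplacian planeLaplacianC
  rw [(hcomp 1).fderiv_eq, (hcomp I).fderiv_eq, hT, hT, map_add]

theorem planeLaplacian_clm_comp_add_mul_eq_zero (T : ℂ →L[ℝ] ℝ) (hf : ContDiffAt ℝ 2 f z)
    {v : ℝ} (h : planeLaplacianC f z + v * f z = 0) :
    planeLaplacian (fun w => T (f w)) z + v * T (f z) = 0 := by
  rw [planeLaplacian_clm_comp T hf, ← smul_eq_mul, ← T.map_smul, ← map_add, real_smul, h,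
    map_zero]

end Laplacian

section LinearizedLiouville

variable (c : ℂ) (N k : ℕ)

noncomputable def liouvilleDenom (z : ℂ) : ℂ :=
  ((1 + ‖z ^ (N + 1) - c‖ ^ 2 : ℝ) : ℂ)

noncomputable def liouvillePotential (z : ℂ) : ℝ :=
  8 * (N + 1) ^ 2 * ‖z‖ ^ (2 * N) / (1 + ‖z ^ (N + 1) - c‖ ^ 2) ^ 2

noncomputable def phiK (z : ℂ) : ℂ :=
  z ^ k * (((N : ℂ) + 1 + k) / ((N : ℂ) + 1) -
    2 * z ^ (N + 1) * conj (z ^ (N + 1) - c) / liouvilleDenom c N z)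

noncomputable def dbarPhiK (z : ℂ) : ℂ :=
  -2 * ((N : ℂ) + 1) * z ^ (k + N + 1) * conj (z ^ N) / liouvilleDenom c N z ^ 2

lemma liouvilleDenom_eq (z : ℂ) :
    liouvilleDenom c N z = 1 + (z ^ (N + 1) - c) * conj (z ^ (N + 1) - c) := by
  rw [liouvilleDenom, mul_conj, normSq_eq_norm_sq]
  push_cast
  ring

lemma liouvilleDenom_ne_zero (z : ℂ) : liouvilleDenom c N z ≠ 0 := by
  unfold liouvilleDenom
  exact_mod_cast (by positivity : (1 + ‖z ^ (N + 1) - c‖ ^ 2 : ℝ) ≠ 0)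

lemma ofReal_liouvillePotential (z : ℂ) :
    (liouvillePotential c N z : ℂ) =
      8 * ((N : ℂ) + 1) ^ 2 * (z ^ N * conj (z ^ N)) / liouvilleDenom c N z ^ 2 := by
  rw [liouvillePotential, liouvilleDenom, mul_conj, normSq_eq_norm_sq, norm_pow, pow_mul']
  push_cast
  ring

lemma hasWirtingerDerivAt_pow_sub (n : ℕ) (z : ℂ) :
    HasWirtingerDerivAt (fun w => w ^ (n + 1) - c) ((n + 1) * z ^ n) 0 z :=
  (HasWirtingerDerivAt.of_hasDerivAt ((hasDerivAt_pow (n + 1) z).sub_const c)).congr_deriv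
    (by simp) rfl

lemma hasWirtingerDerivAt_liouvilleDenom (z : ℂ) :
    HasWirtingerDerivAt (liouvilleDenom c N)
      ((N + 1) * z ^ N * conj (z ^ (N + 1) - c))
      ((N + 1) * (z ^ (N + 1) - c) * conj (z ^ N)) z := by
  have h := (HasWirtingerDerivAt.of_hasDerivAt (hasDerivAt_const z (1 : ℂ))).add
    (hasWirtingerDerivAt_pow_sub c N z).ofReal_norm_sq
  have hfun : (fun w => 1 + ((‖w ^ (N + 1) - c‖ ^ 2 : ℝ) : ℂ)) = liouvilleDenom c N := by
    ext w
    simp [liouvilleDenom]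
  rw [hfun] at h
  exact h.congr_deriv
    (by simp only [map_zero, mul_zero, add_zero, zero_add]; ring)
    (by simp only [mul_zero, zero_add, map_mul, map_add, map_natCast, map_one]; ring)

lemma contDiff_phiK : ContDiff ℝ 2 (phiK c N k) := by
  have hconj : ContDiff ℝ 2 (conj : ℂ → ℂ) := conjCLE.contDiff
  have hdenom : ContDiff ℝ 2 (liouvilleDenom c N) :=
    ofRealCLM.contDiff.comp (contDiff_const.add ((contDiff_norm_sq ℝ).comp (by fun_prop)))
  unfold phiK
  simp only [div_eq_mul_inv]
  exact contDiff_id.pow k |>.mul (contDiff_const.sub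
    ((ContDiff.mul (by fun_prop) (hdenom.inv (liouvilleDenom_ne_zero c N)))))

lemma hasWirtingerDerivAt_phiK (z : ℂ) :
    ∃ a, HasWirtingerDerivAt (phiK c N k) a (dbarPhiK c N k z) z := by
  have hD := liouvilleDenom_ne_zero c N z
  have hnum := (((HasWirtingerDerivAt.of_hasDerivAt (hasDerivAt_pow (N + 1) z)).const_mul 2).mul
    (hasWirtingerDerivAt_pow_sub c N z).star)
  have h := (HasWirtingerDerivAt.of_hasDerivAt (hasDerivAt_pow k z)).mul
    ((HasWirtingerDerivAt.of_hasDerivAt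
      (hasDerivAt_const z (((N : ℂ) + 1 + k) / ((N : ℂ) + 1)))).sub
      (hnum.div (hasWirtingerDerivAt_liouvilleDenom c N z) hD))
  refine ⟨_, h.congr_deriv rfl ?_⟩
  rw [liouvilleDenom_eq] at hD
  rw [dbarPhiK, liouvilleDenom_eq]
  simp only [map_mul, map_add, map_natCast, map_one, map_pow, map_sub, mul_zero, add_zero, zero_sub,
    mul_neg, neg_mul]
  field_simp
  ring

lemma hasWirtingerDerivAt_dbarPhiK (z : ℂ) :
    ∃ b, HasWirtingerDerivAt (dbarPhiK c N k)
      (-2 * ((N : ℂ) + 1) * conj (z ^ N) * (((k : ℂ) + N + 1) * z ^ (k + N) * liouvilleDenom c N z -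
        2 * ((N : ℂ) + 1) * z ^ (k + 2 * N + 1) * conj (z ^ (N + 1) - c)) /
        liouvilleDenom c N z ^ 3) b z := by
  have h := ((((HasWirtingerDerivAt.of_hasDerivAt (hasDerivAt_pow (k + N + 1) z)).const_mul
    (-2 * ((N : ℂ) + 1))).mul (HasWirtingerDerivAt.of_hasDerivAt (hasDerivAt_pow N z)).star).div
      ((hasWirtingerDerivAt_liouvilleDenom c N z).pow 2)
      (pow_ne_zero 2 (liouvilleDenom_ne_zero c N z)))
  refine ⟨_, h.congr_deriv ?_ rfl⟩
  have hD := liouvilleDenom_ne_zero c N z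
  simp only [neg_mul, map_zero, mul_zero, map_pow, Nat.cast_add, Nat.cast_one,
    add_tsub_cancel_right, mul_neg, zero_add, Nat.cast_ofNat, Nat.add_one_sub_one, pow_one, map_sub,
    sub_neg_eq_add]
  field_simp
  ring

lemma planeLaplacianC_phiK_add_potential_mul (z : ℂ) :
    planeLaplacianC (phiK c N k) z + liouvillePotential c N z * phiK c N k z = 0 := by
  have hD := liouvilleDenom_ne_zero c N z
  obtain ⟨_, h⟩ := hasWirtingerDerivAt_dbarPhiK c N k z
  rw [planeLaplacianC_eq_four_mul_of_hasWirtingerDerivAt (contDiff_phiK c N k).contDiffAt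
    (.of_forall (hasWirtingerDerivAt_phiK c N k)) h, ofReal_liouvillePotential, phiK]
  field_simp
  ring

end LinearizedLiouville

/-- The functions `φ_k` solve the linearized equation `Δφ + Vφ = 0` on all of `ℂ`,
and in particular so do their real and imaginary parts. -/
theorem phi_k_solves_linearized (c : ℂ) (N k : ℕ)
    (V : ℂ → ℝ)
    (hV : ∀ z : ℂ, V z = 8 * (N + 1) ^ 2 * ‖z‖ ^ (2 * N) /
      (1 + ‖z ^ (N + 1) - c‖ ^ 2) ^ 2)
    (φ : ℂ → ℂ)
    (hφ : ∀ z : ℂ, φ z = z ^ k * (((N : ℂ) + 1 + k) / ((N : ℂ) + 1) -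
      2 * z ^ (N + 1) * (starRingEnd ℂ) (z ^ (N + 1) - c) /
        (((1 + ‖z ^ (N + 1) - c‖ ^ 2 : ℝ)) : ℂ))) :
    (∀ z : ℂ, planeLaplacianC φ z + (V z : ℂ) * φ z = 0) ∧
    (∀ z : ℂ, planeLaplacian (fun w => (φ w).re) z + V z * (φ z).re = 0) ∧
    (∀ z : ℂ, planeLaplacian (fun w => (φ w).im) z + V z * (φ z).im = 0) := by
  obtain rfl : V = liouvillePotential c N := funext hV
  obtain rfl : φ = phiK c N k := funext hφ
  have hsol := planeLaplacianC_phiK_add_potential_mul c N k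
  have hsmooth := contDiff_phiK c N k
  exact ⟨hsol, fun z => planeLaplacian_clm_comp_add_mul_eq_zero reCLM hsmooth.contDiffAt (hsol z),
    fun z => planeLaplacian_clm_comp_add_mul_eq_zero imCLM hsmooth.contDiffAt (hsol z)⟩
end

section
/- Let c ∈ ℂ and N ∈ ℕ. Each of the three functions Z₀(z) = (1−|z^{N+1}−c|²)/(1+|z^{N+1}−c|²), Z₁(z) = Re(z^{N+1}−c)/(1+|z^{N+1}−c|²), Z₂(z) = Im(z^{N+1}−c)/(1+|z^{N+1}−c|²) is bounded on ℂ and satisfies Δφ + Vφ = 0 on all of ℂ, where V(z) = 8(N+1)²|z|^{2N}/(1+|z^{N+1}−c|²)². -/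
open Complex ContinuousLinearMap

theorem planeLaplacian_eq_of_hasFDerivAt_fderiv {f : ℂ → ℝ} {f'' : ℂ →L[ℝ] ℂ →L[ℝ] ℝ} {z : ℂ}
    (hf : HasFDerivAt (fderiv ℝ f) f'' z) :
    planeLaplacian f z = f'' 1 1 + f'' I I := by
  rw [planeLaplacian, (hf.clm_apply (hasFDerivAt_const 1 z)).fderiv,
    (hf.clm_apply (hasFDerivAt_const I z)).fderiv]
  simp

theorem ContinuousLinearMap.apply_mul_self_add_apply_mul_I_self (B : ℂ →L[ℝ] ℂ →L[ℝ] ℝ)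
    (p : ℂ) : B p p + B (p * I) (p * I) = normSq p * (B 1 1 + B I I) := by
  obtain ⟨x, y⟩ := p
  have hp : (⟨x, y⟩ : ℂ) = x • (1 : ℂ) + y • I := by apply Complex.ext <;> simp
  have hpI : (⟨x, y⟩ : ℂ) * I = (-y) • (1 : ℂ) + x • I := by apply Complex.ext <;> simp
  rw [hpI, normSq_mk, hp]
  simp only [map_add, map_smul, add_apply, smul_apply, smul_eq_mul]
  ring

theorem planeLaplacian_comp_holomorphic {φ : ℂ → ℝ} {g : ℂ → ℂ} {z : ℂ}
    (hφ : Differentiable ℝ φ) (hφ' : DifferentiableAt ℝ (fderiv ℝ φ) (g z))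
    (hg : Differentiable ℂ g) :
    planeLaplacian (φ ∘ g) z = normSq (deriv g z) * planeLaplacian φ (g z) := by
  have hchain : ∀ v : ℂ, (fun w => fderiv ℝ (φ ∘ g) w v) =
      fun w => fderiv ℝ φ (g w) (v * deriv g w) := fun v => funext fun w => by
    rw [((hφ (g w)).hasFDerivAt.comp w ((hg w).hasDerivAt.hasFDerivAt.restrictScalars ℝ)).fderiv]
    simp
  have hsecond : ∀ v : ℂ, HasFDerivAt (fun w => fderiv ℝ φ (g w) (v * deriv g w)) _ z :=
    fun v => (hφ'.hasFDerivAt.comp z ((hg z).hasDerivAt.hasFDerivAt.restrictScalars ℝ)).clm_apply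
      (((hg.deriv z).hasDerivAt.const_mul v).hasFDerivAt.restrictScalars ℝ)
  rw [planeLaplacian_eq_of_hasFDerivAt_fderiv hφ'.hasFDerivAt,
    ← apply_mul_self_add_apply_mul_I_self]
  simp only [planeLaplacian, hchain, (hsecond _).fderiv]
  simp only [add_apply, ContinuousLinearMap.comp_apply, Function.comp_apply,
    flip_apply, coe_restrictScalars', toSpanSingleton_apply, smul_eq_mul, one_mul]
  -- the `g''` terms cancel since `I * I = -1`
  rw [← mul_assoc I I, I_mul_I, neg_one_mul, map_neg, mul_comm I]
  ring

theorem HasFDerivAt.div {𝕜 E : Type*} [NontriviallyNormedField 𝕜] [NormedAddCommGroup E]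
    [NormedSpace 𝕜 E] {u v : E → 𝕜} {u' v' : E →L[𝕜] 𝕜} {x : E} (hu : HasFDerivAt u u' x)
    (hv : HasFDerivAt v v' x) (hx : v x ≠ 0) :
    HasFDerivAt (fun y => u y / v y) ((v x ^ 2)⁻¹ • (v x • u' - u x • v')) x := by
  simp only [div_eq_mul_inv]
  refine (hu.mul ((hasDerivAt_inv hx).comp_hasFDerivAt x hv)).congr_fderiv ?_
  ext y
  simp only [Function.comp_apply, add_apply, smul_apply, smul_eq_mul, neg_mul, mul_neg, sub_apply]
  field_simp
  ring

theorem hasFDerivAt_normSq (w : ℂ) :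
    HasFDerivAt normSq ((2 * w.re) • reCLM + (2 * w.im) • imCLM) w := by
  have hfun : (normSq : ℂ → ℝ) = fun w => w.re * w.re + w.im * w.im := funext normSq_apply
  rw [hfun]
  refine ((reCLM.hasFDerivAt.mul reCLM.hasFDerivAt).add
    (imCLM.hasFDerivAt.mul imCLM.hasFDerivAt)).congr_fderiv ?_
  ext v
  simp only [reCLM_apply, imCLM_apply, add_apply, smul_apply, smul_eq_mul]
  ring

theorem one_add_normSq_pos (w : ℂ) : 0 < 1 + normSq w :=
  add_pos_of_pos_of_nonneg one_pos (normSq_nonneg w)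

section StereoHarmonic

variable (a b c : ℝ)

noncomputable def stereoHarmonic (w : ℂ) : ℝ :=
  (a * (1 - normSq w) + b * w.re + c * w.im) / (1 + normSq w)

noncomputable def stereoHarmonicDerivRe (w : ℂ) : ℝ :=
  (b * (1 + normSq w) - 2 * w.re * (2 * a + b * w.re + c * w.im)) / (1 + normSq w) ^ 2

noncomputable def stereoHarmonicDerivIm (w : ℂ) : ℝ :=
  (c * (1 + normSq w) - 2 * w.im * (2 * a + b * w.re + c * w.im)) / (1 + normSq w) ^ 2

theorem hasFDerivAt_stereoHarmonic (w : ℂ) :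
    HasFDerivAt (stereoHarmonic a b c)
      (stereoHarmonicDerivRe a b c w • reCLM + stereoHarmonicDerivIm a b c w • imCLM) w := by
  have hnum : HasFDerivAt (fun w : ℂ => a * (1 - normSq w) + b * w.re + c * w.im) _ w :=
    ((((hasFDerivAt_normSq w).const_sub 1).const_mul a).add
      (reCLM.hasFDerivAt.const_mul b)).add (imCLM.hasFDerivAt.const_mul c)
  have hD := (one_add_normSq_pos w).ne'
  refine (hnum.div ((hasFDerivAt_normSq w).const_add 1) hD).congr_fderiv ?_
  ext v
  simp only [stereoHarmonicDerivRe, stereoHarmonicDerivIm, normSq_apply, smul_add, smul_neg,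
    add_apply, sub_apply, neg_apply, smul_apply, reCLM_apply, imCLM_apply, smul_eq_mul]
  field_simp
  ring

theorem exists_hasFDerivAt_fderiv_stereoHarmonic (z : ℂ) :
    ∃ φ'' : ℂ →L[ℝ] ℂ →L[ℝ] ℝ, HasFDerivAt (fderiv ℝ (stereoHarmonic a b c)) φ'' z ∧
      φ'' 1 1 + φ'' I I = -8 / (1 + normSq z) ^ 2 * stereoHarmonic a b c z := by
  have hfderiv : fderiv ℝ (stereoHarmonic a b c) =
      fun w => stereoHarmonicDerivRe a b c w • reCLM + stereoHarmonicDerivIm a b c w • imCLM :=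
    funext fun w => (hasFDerivAt_stereoHarmonic a b c w).fderiv
  have hD : HasFDerivAt (fun w => 1 + normSq w) _ z := (hasFDerivAt_normSq z).const_add 1
  have hL : HasFDerivAt (fun w : ℂ => 2 * a + b * w.re + c * w.im) _ z :=
    ((reCLM.hasFDerivAt.const_mul b).const_add (2 * a)).add (imCLM.hasFDerivAt.const_mul c)
  have hD2 : (1 + normSq z) ^ 2 ≠ 0 := pow_ne_zero 2 (one_add_normSq_pos z).ne'
  have hp : HasFDerivAt (stereoHarmonicDerivRe a b c) _ z :=
    ((hD.const_mul b).sub ((reCLM.hasFDerivAt.const_mul 2).mul hL)).div (hD.pow 2) hD2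
  have hq : HasFDerivAt (stereoHarmonicDerivIm a b c) _ z :=
    ((hD.const_mul c).sub ((imCLM.hasFDerivAt.const_mul 2).mul hL)).div (hD.pow 2) hD2
  rw [hfderiv]
  refine ⟨_, (hp.smul_const reCLM).add (hq.smul_const imCLM), ?_⟩
  have := (one_add_normSq_pos z).ne'
  simp only [stereoHarmonic, normSq_apply, add_apply, sub_apply, smul_apply, smulRight_apply,
    Pi.sub_apply, Pi.mul_apply, reCLM_apply, imCLM_apply, one_re, one_im, I_re, I_im, smul_eq_mul,
    nsmul_eq_mul]
  field_simp
  ring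

theorem abs_stereoHarmonic_le (w : ℂ) : |stereoHarmonic a b c w| ≤ |a| + |b| + |c| := by
  have hD := one_add_normSq_pos w
  rw [stereoHarmonic, abs_div, abs_of_pos hD, div_le_iff₀ hD]
  have hre : |w.re| ≤ 1 + normSq w := by
    rw [normSq_apply]; cases abs_cases w.re <;> nlinarith [mul_self_nonneg w.im]
  have him : |w.im| ≤ 1 + normSq w := by
    rw [normSq_apply]; cases abs_cases w.im <;> nlinarith [mul_self_nonneg w.re]
  have hnum : |1 - normSq w| ≤ 1 + normSq w :=
    abs_le.mpr ⟨by linarith, by linarith [normSq_nonneg w]⟩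
  calc |a * (1 - normSq w) + b * w.re + c * w.im|
      ≤ |a| * |1 - normSq w| + |b| * |w.re| + |c| * |w.im| := by
        simpa only [abs_mul] using abs_add_three (a * (1 - normSq w)) (b * w.re) (c * w.im)
    _ ≤ (|a| + |b| + |c|) * (1 + normSq w) := by
        rw [add_mul, add_mul]
        gcongr

theorem planeLaplacian_stereoHarmonic_comp_add_eq_zero {g : ℂ → ℂ} (hg : Differentiable ℂ g)
    (z : ℂ) :
    planeLaplacian (stereoHarmonic a b c ∘ g) z +
      8 * normSq (deriv g z) / (1 + normSq (g z)) ^ 2 * stereoHarmonic a b c (g z) = 0 := by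
  obtain ⟨φ'', hφ'', hΔ⟩ := exists_hasFDerivAt_fderiv_stereoHarmonic a b c (g z)
  rw [planeLaplacian_comp_holomorphic
      (fun w => (hasFDerivAt_stereoHarmonic a b c w).differentiableAt) hφ''.differentiableAt hg,
    planeLaplacian_eq_of_hasFDerivAt_fderiv hφ'', hΔ]
  ring

end StereoHarmonic

/-- Each of `Z₀, Z₁, Z₂` is bounded on `ℂ` and solves `Δφ + Vφ = 0` on all of `ℂ`. -/
theorem Z_bounded_solutions (c : ℂ) (N : ℕ)
    (V : ℂ → ℝ)
    (hV : ∀ z : ℂ, V z = 8 * (N + 1) ^ 2 * ‖z‖ ^ (2 * N) /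
      (1 + ‖z ^ (N + 1) - c‖ ^ 2) ^ 2)
    (Z₀ Z₁ Z₂ : ℂ → ℝ)
    (hZ₀ : ∀ z : ℂ, Z₀ z = (1 - ‖z ^ (N + 1) - c‖ ^ 2) /
      (1 + ‖z ^ (N + 1) - c‖ ^ 2))
    (hZ₁ : ∀ z : ℂ, Z₁ z = (z ^ (N + 1) - c).re / (1 + ‖z ^ (N + 1) - c‖ ^ 2))
    (hZ₂ : ∀ z : ℂ, Z₂ z = (z ^ (N + 1) - c).im / (1 + ‖z ^ (N + 1) - c‖ ^ 2)) :
    ∀ Z ∈ ({Z₀, Z₁, Z₂} : Set (ℂ → ℝ)),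
      (∃ M : ℝ, ∀ z : ℂ, |Z z| ≤ M) ∧
      ∀ z : ℂ, planeLaplacian Z z + V z * Z z = 0 := by
  set g : ℂ → ℂ := fun w => w ^ (N + 1) - c
  have hg : Differentiable ℂ g := by fun_prop
  have hV_eq : ∀ z, V z = 8 * normSq (deriv g z) / (1 + normSq (g z)) ^ 2 := fun z => by
    have hderiv : deriv g z = (N + 1) * z ^ N := by simp [g]
    have hnorm : ‖(N : ℂ) + 1‖ = N + 1 := by exact_mod_cast Complex.norm_natCast (N + 1)
    rw [hV, hderiv, normSq_eq_norm_sq, normSq_eq_norm_sq, norm_mul, norm_pow, hnorm, pow_mul']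
    ring
  intro Z hZ
  obtain ⟨a, b, c', rfl⟩ : ∃ a b c' : ℝ, Z = stereoHarmonic a b c' ∘ g := by
    rcases hZ with rfl | rfl | rfl
    exacts [⟨1, 0, 0, funext fun z => by simp [hZ₀, stereoHarmonic, g, normSq_eq_norm_sq]⟩,
      ⟨0, 1, 0, funext fun z => by simp [hZ₁, stereoHarmonic, g, normSq_eq_norm_sq]⟩,
      ⟨0, 0, 1, funext fun z => by simp [hZ₂, stereoHarmonic, g, normSq_eq_norm_sq]⟩]
  refine ⟨⟨_, fun z => abs_stereoHarmonic_le a b c' (g z)⟩, fun z => ?_⟩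
  rw [hV_eq]
  exact planeLaplacian_stereoHarmonic_comp_add_eq_zero a b c' hg z
end

section
/- Let c ∈ ℂ, N ∈ ℕ, and set φ₀(z) = Re( 1 − 2 z^{N+1}\overline{(z^{N+1}−c)}/(1+|z^{N+1}−c|²) ). There exist constants C > 0 and ρ₀ > 0 such that for all 0 < ρ < ρ₀ and all integers k ≥ 1: |(1/2π)∫₀^{2π} φ₀(ρe^{iθ}) dθ − 1| ≤ C ρ^{N+1}, |∫₀^{2π} cos(kθ) φ₀(ρe^{iθ}) dθ| ≤ C ρ^{N+1}/(k+1), and |∫₀^{2π} sin(kθ) φ₀(ρe^{iθ}) dθ| ≤ C ρ^{N+1}/(k+1). -/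
/-!
Put `w = z ^ (N + 1)`, so that `φ₀ z = P w` for a smooth function `P` on `ℂ` with `P 0 = 1`.
If `K` bounds `DP` on the closed unit disc, then for `ρ ≤ 1` the mean value theorem gives
`|P w - 1| ≤ K ρ ^ (N + 1)` on the circle `|z| = ρ`, which bounds the mean. The `θ`-derivative of
`P (w θ)` is `DP (w θ) (i (N + 1) w θ)`, of size at most `K (N + 1) ρ ^ (N + 1)`; one integration by
parts against `cos kθ` or `sin kθ`, whose boundary terms vanish by `2π`-periodicity, turns this
into the bound `2π K (N + 1) ρ ^ (N + 1) / k` for the Fourier coefficients.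
-/

open Complex ComplexConjugate intervalIntegral MeasureTheory Real Set Metric

theorem abs_integral_deriv_mul_le {g g' v v' : ℝ → ℝ} {a b M B : ℝ} (hab : a ≤ b)
    (hg : ∀ x ∈ uIcc a b, HasDerivAt g (g' x) x) (hv : ∀ x ∈ uIcc a b, HasDerivAt v (v' x) x)
    (hg' : IntervalIntegrable g' volume a b)
    (hv' : IntervalIntegrable v' volume a b)
    (hboundary : g b * v b = g a * v a)
    (hM : ∀ x ∈ uIcc a b, |g' x| ≤ M) (hB : ∀ x ∈ uIcc a b, |v x| ≤ B) :
    |∫ x in a..b, v' x * g x| ≤ M * B * (b - a) := by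
  simp_rw [mul_comm (v' _)]
  rw [integral_mul_deriv_eq_deriv_mul hg hv hg' hv', hboundary, sub_self, zero_sub, abs_neg,
    ← abs_of_nonneg (sub_nonneg.2 hab)]
  refine norm_integral_le_of_norm_le_const (f := fun x => g' x * v x) fun x hx => ?_
  have hx' := uIoc_subset_uIcc hx
  rw [Real.norm_eq_abs, abs_mul]
  exact mul_le_mul (hM x hx') (hB x hx') (abs_nonneg _) ((abs_nonneg _).trans (hM x hx'))

theorem abs_integral_cos_mul_le {g g' : ℝ → ℝ} {M : ℝ} (hg : ∀ x, HasDerivAt g (g' x) x)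
    (hg' : IntervalIntegrable g' volume 0 (2 * π)) (hM : ∀ x, |g' x| ≤ M)
    {k : ℕ} (hk : k ≠ 0) :
    |∫ θ in (0 : ℝ)..(2 * π), Real.cos (k * θ) * g θ| ≤ 2 * π * M / k := by
  have hk0 : (k : ℝ) ≠ 0 := Nat.cast_ne_zero.2 hk
  have hv (x : ℝ) : HasDerivAt (fun θ => Real.sin (k * θ) / k) (Real.cos (k * x)) x := by
    simpa [hk0] using (((hasDerivAt_id x).const_mul (k : ℝ)).sin).div_const (k : ℝ)
  have h := abs_integral_deriv_mul_le (v := fun θ => Real.sin (k * θ) / k) (B := 1 / k)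
    Real.two_pi_pos.le (fun x _ => hg x) (fun x _ => hv x) hg'
    ((by fun_prop : Continuous fun θ : ℝ => Real.cos (k * θ)).intervalIntegrable _ _)
    (by simp [by simpa using Real.sin_nat_mul_two_pi_sub 0 k]) (fun x _ => hM x) fun x _ => by
      rw [abs_div, Nat.abs_cast]
      exact div_le_div_of_nonneg_right (abs_sin_le_one _) (Nat.cast_nonneg k)
  convert h using 1
  ring

theorem abs_integral_sin_mul_le {g g' : ℝ → ℝ} {M : ℝ} (hg : ∀ x, HasDerivAt g (g' x) x)
    (hg' : IntervalIntegrable g' volume 0 (2 * π)) (hM : ∀ x, |g' x| ≤ M)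
    (hper : g (2 * π) = g 0) {k : ℕ} (hk : k ≠ 0) :
    |∫ θ in (0 : ℝ)..(2 * π), Real.sin (k * θ) * g θ| ≤ 2 * π * M / k := by
  have hk0 : (k : ℝ) ≠ 0 := Nat.cast_ne_zero.2 hk
  have hv (x : ℝ) : HasDerivAt (fun θ => -Real.cos (k * θ) / k) (Real.sin (k * x)) x := by
    simpa [hk0] using (((hasDerivAt_id x).const_mul (k : ℝ)).cos).neg.div_const (k : ℝ)
  have h := abs_integral_deriv_mul_le (v := fun θ => -Real.cos (k * θ) / k) (B := 1 / k)
    Real.two_pi_pos.le (fun x _ => hg x) (fun x _ => hv x) hg'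
    ((by fun_prop : Continuous fun θ : ℝ => Real.sin (k * θ)).intervalIntegrable _ _)
    (by simp [hper, Real.cos_nat_mul_two_pi]) (fun x _ => hM x) fun x _ => by
      rw [abs_div, abs_neg, Nat.abs_cast]
      exact div_le_div_of_nonneg_right (abs_cos_le_one _) (Nat.cast_nonneg k)
  convert h using 1
  ring

theorem exists_pos_norm_fderiv_le_closedBall {E G : Type*} [NormedAddCommGroup E]
    [NormedSpace ℝ E] [ProperSpace E] [NormedAddCommGroup G] [NormedSpace ℝ G] {F : E → G}
    (hF : ContDiff ℝ 1 F) (x : E) (r : ℝ) : ∃ K > 0, ∀ w ∈ closedBall x r, ‖fderiv ℝ F w‖ ≤ K := by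
  obtain ⟨K, hK⟩ := (isCompact_closedBall x r).exists_bound_of_continuousOn
    (hF.continuous_fderiv one_ne_zero).continuousOn
  exact ⟨max K 1, by positivity, fun w hw => (hK w hw).trans (le_max_left _ _)⟩

theorem hasDerivAt_ofReal_mul_exp_I_mul_pow (ρ : ℝ) (n : ℕ) (θ : ℝ) :
    HasDerivAt (fun θ : ℝ => ((ρ : ℂ) * exp (I * θ)) ^ n)
      (n * I * ((ρ : ℂ) * exp (I * θ)) ^ n) θ := by
  have h := (((hasDerivAt_id (θ : ℂ)).const_mul I).cexp.const_mul (ρ : ℂ)).comp_ofReal.fun_pow n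
  simp only [id, mul_one] at h
  refine h.congr_deriv ?_
  rcases n with _ | n
  · simp
  · rw [Nat.add_sub_cancel, pow_succ]
    push_cast
    ring

theorem norm_ofReal_mul_exp_I_mul_pow {ρ : ℝ} (hρ : 0 ≤ ρ) (n : ℕ) (θ : ℝ) :
    ‖((ρ : ℂ) * exp (I * θ)) ^ n‖ = ρ ^ n := by
  rw [norm_pow, norm_mul, norm_exp_I_mul_ofReal, mul_one, norm_real, Real.norm_of_nonneg hρ]

theorem abs_one_div_mul_integral_sub_le {g : ℝ → ℝ} {b c A : ℝ} (hb : 0 < b)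
    (hg : IntervalIntegrable g volume 0 b) (hA : ∀ x, |g x - c| ≤ A) :
    |1 / b * (∫ x in (0 : ℝ)..b, g x) - c| ≤ A := by
  have h := norm_integral_le_of_norm_le_const (a := 0) (b := b) (f := fun x => g x - c)
    fun x _ => hA x
  rw [integral_sub hg intervalIntegrable_const, intervalIntegral.integral_const, sub_zero, smul_eq_mul,
    Real.norm_eq_abs, abs_of_pos hb] at h
  rw [show 1 / b * (∫ x in (0 : ℝ)..b, g x) - c = 1 / b * ((∫ x in (0 : ℝ)..b, g x) - b * c) by
    field_simp, abs_mul, abs_of_pos (one_div_pos.2 hb)]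
  calc 1 / b * |(∫ x in (0 : ℝ)..b, g x) - b * c| ≤ 1 / b * (A * b) := by gcongr
    _ = A := by field_simp

theorem ofReal_mul_exp_I_mul_pow_mem_closedBall {ρ : ℝ} (hρ0 : 0 ≤ ρ) (hρ1 : ρ ≤ 1) (n : ℕ)
    (θ : ℝ) : ((ρ : ℂ) * exp (I * θ)) ^ n ∈ closedBall (0 : ℂ) 1 := by
  simpa [norm_ofReal_mul_exp_I_mul_pow hρ0] using pow_le_one₀ hρ0 hρ1

theorem abs_comp_ofReal_mul_exp_I_mul_pow_sub_le {F : ℂ → ℝ} {K ρ : ℝ} (hF : Differentiable ℝ F)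
    (hK : ∀ w ∈ closedBall (0 : ℂ) 1, ‖fderiv ℝ F w‖ ≤ K) (hρ0 : 0 ≤ ρ) (hρ1 : ρ ≤ 1) (n : ℕ)
    (θ : ℝ) : |F (((ρ : ℂ) * exp (I * θ)) ^ n) - F 0| ≤ K * ρ ^ n := by
  simpa [norm_ofReal_mul_exp_I_mul_pow hρ0] using
    (convex_closedBall 0 1).norm_image_sub_le_of_norm_fderiv_le (fun x _ => hF x) hK
      (mem_closedBall_self zero_le_one) (ofReal_mul_exp_I_mul_pow_mem_closedBall hρ0 hρ1 n θ)

theorem abs_fderiv_apply_ofReal_mul_exp_I_mul_pow_le {F : ℂ → ℝ} {K ρ : ℝ}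
    (hK : ∀ w ∈ closedBall (0 : ℂ) 1, ‖fderiv ℝ F w‖ ≤ K) (hρ0 : 0 ≤ ρ) (hρ1 : ρ ≤ 1) (n : ℕ)
    (θ : ℝ) :
    |fderiv ℝ F (((ρ : ℂ) * exp (I * θ)) ^ n) (n * I * ((ρ : ℂ) * exp (I * θ)) ^ n)|
      ≤ K * (n * ρ ^ n) := by
  refine ((fderiv ℝ F _).le_opNorm _).trans ?_
  rw [norm_mul, norm_mul, norm_ofReal_mul_exp_I_mul_pow hρ0, norm_I, mul_one,
    Complex.norm_natCast]
  gcongr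
  exact hK _ (ofReal_mul_exp_I_mul_pow_mem_closedBall hρ0 hρ1 n θ)

theorem exists_fourier_bounds_comp_pow {F : ℂ → ℝ} (hF : ContDiff ℝ 1 F) (n : ℕ) :
    ∃ C > 0, ∀ ρ : ℝ, 0 ≤ ρ → ρ ≤ 1 →
      |1 / (2 * π) * (∫ θ in (0 : ℝ)..2 * π, F (((ρ : ℂ) * exp (I * θ)) ^ n)) - F 0|
        ≤ C * ρ ^ n ∧
      ∀ k : ℕ, 1 ≤ k →
        |∫ θ in (0 : ℝ)..2 * π, Real.cos (k * θ) * F (((ρ : ℂ) * exp (I * θ)) ^ n)|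
          ≤ C * ρ ^ n / (k + 1) ∧
        |∫ θ in (0 : ℝ)..2 * π, Real.sin (k * θ) * F (((ρ : ℂ) * exp (I * θ)) ^ n)|
          ≤ C * ρ ^ n / (k + 1) := by
  obtain ⟨K, hK0, hK⟩ := exists_pos_norm_fderiv_le_closedBall hF 0 1
  refine ⟨K * (4 * π * n + 1), by positivity, fun ρ hρ0 hρ1 => ?_⟩
  have hFdiff := hF.differentiable one_ne_zero
  set w := fun θ : ℝ => ((ρ : ℂ) * exp (I * θ)) ^ n with hw
  set g' := fun θ : ℝ => fderiv ℝ F (w θ) (n * I * w θ)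
  have hderiv (θ : ℝ) : HasDerivAt (fun θ => F (w θ)) (g' θ) θ :=
    (hFdiff (w θ)).hasFDerivAt.comp_hasDerivAt θ (hasDerivAt_ofReal_mul_exp_I_mul_pow ρ n θ)
  have hg' : IntervalIntegrable g' volume 0 (2 * π) := by
    have := hF.continuous_fderiv one_ne_zero
    exact Continuous.intervalIntegrable (by fun_prop) _ _
  have hderiv_le := abs_fderiv_apply_ofReal_mul_exp_I_mul_pow_le hK hρ0 hρ1 n
  have hper : F (w (2 * π)) = F (w 0) := by
    simp only [hw, ofReal_mul, ofReal_ofNat, mul_comm I, exp_two_pi_mul_I, ofReal_zero, zero_mul,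
      Complex.exp_zero]
  have hKρ : 0 ≤ K * ρ ^ n := by positivity
  have hcoeff (k : ℕ) (hk : 1 ≤ k) :
      2 * π * (K * (n * ρ ^ n)) / k ≤ K * (4 * π * n + 1) * ρ ^ n / (k + 1) := by
    have hk' : (1 : ℝ) ≤ k := Nat.one_le_cast.2 hk
    rw [div_le_div_iff₀ (by positivity) (by positivity)]
    nlinarith [mul_nonneg hKρ (by positivity : (0 : ℝ) ≤ π * n * (k - 1))]
  refine ⟨(abs_one_div_mul_integral_sub_le two_pi_pos ?_
    (abs_comp_ofReal_mul_exp_I_mul_pow_sub_le hFdiff hK hρ0 hρ1 n)).trans ?_,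
    fun k hk => ⟨?_, ?_⟩⟩
  · have := hF.continuous
    exact Continuous.intervalIntegrable (by fun_prop) _ _
  · nlinarith [mul_nonneg hKρ (by positivity : (0 : ℝ) ≤ π * n)]
  · exact (abs_integral_cos_mul_le hderiv hg' hderiv_le (by omega)).trans (hcoeff k hk)
  · exact (abs_integral_sin_mul_le hderiv hg' hderiv_le hper (by omega)).trans (hcoeff k hk)

/-- `φ₀ z = phiProfile c (z ^ (N + 1))`. -/
noncomputable def phiProfile (c w : ℂ) : ℝ :=
  (1 - 2 * w * conj (w - c) / ((1 + ‖w - c‖ ^ 2 : ℝ) : ℂ)).re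

theorem phiProfile_eq (c w : ℂ) :
    phiProfile c w = 1 - 2 * inner ℝ (w - c) w / (1 + ‖w - c‖ ^ 2) := by
  rw [phiProfile, Complex.inner, sub_re, one_re, div_ofReal_re, mul_assoc, ← ofReal_ofNat,
    re_ofReal_mul]

theorem contDiff_phiProfile (c : ℂ) : ContDiff ℝ 1 (phiProfile c) := by
  simp_rw [funext (phiProfile_eq c)]
  exact contDiff_const.sub ((contDiff_const.mul ((contDiff_id.sub contDiff_const).inner ℝ
    contDiff_id)).div (contDiff_const.add ((contDiff_id.sub contDiff_const).norm_sq ℝ))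
    fun w => by positivity)

theorem phiProfile_zero (c : ℂ) : phiProfile c 0 = 1 := by
  simp [phiProfile]

/-- Fourier-type estimates for `φ₀` on small circles: the mean of `φ₀(ρe^{iθ})` is
`1 + O(ρ^{N+1})`, and its `cos(kθ)`, `sin(kθ)` Fourier coefficients are
`O(ρ^{N+1}/(k+1))`, uniformly in `k ≥ 1`. -/
theorem phi0_fourier_estimates (c : ℂ) (N : ℕ)
    (φ₀ : ℂ → ℝ)
    (hφ₀ : ∀ z : ℂ, φ₀ z = (1 - 2 * z ^ (N + 1) * (starRingEnd ℂ) (z ^ (N + 1) - c) /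
      (((1 + ‖z ^ (N + 1) - c‖ ^ 2 : ℝ)) : ℂ)).re) :
    ∃ C > (0 : ℝ), ∃ ρ₀ > (0 : ℝ), ∀ ρ : ℝ, 0 < ρ → ρ < ρ₀ →
      |(1 / (2 * Real.pi)) *
          (∫ θ in (0 : ℝ)..(2 * Real.pi), φ₀ ((ρ : ℂ) * Complex.exp (Complex.I * θ))) - 1|
        ≤ C * ρ ^ (N + 1) ∧
      ∀ k : ℕ, 1 ≤ k →
        |∫ θ in (0 : ℝ)..(2 * Real.pi),
            Real.cos (k * θ) * φ₀ ((ρ : ℂ) * Complex.exp (Complex.I * θ))|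
          ≤ C * ρ ^ (N + 1) / (k + 1) ∧
        |∫ θ in (0 : ℝ)..(2 * Real.pi),
            Real.sin (k * θ) * φ₀ ((ρ : ℂ) * Complex.exp (Complex.I * θ))|
          ≤ C * ρ ^ (N + 1) / (k + 1) := by
  obtain ⟨C, hC, hbounds⟩ := exists_fourier_bounds_comp_pow (contDiff_phiProfile c) (N + 1)
  refine ⟨C, hC, 1, one_pos, fun ρ hρ hρ1 => ?_⟩
  obtain rfl : φ₀ = fun z => phiProfile c (z ^ (N + 1)) := funext hφ₀
  simpa only [phiProfile_zero] using hbounds ρ hρ.le hρ1.le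
end

section
/- Let c ∈ ℂ, N ∈ ℕ and define φ₀(z) = Re( 1 − 2 z^{N+1}\overline{(z^{N+1}−c)}/(1+|z^{N+1}−c|²) ), and for j ≥ 1, φ_j¹(z) = ((N+1)/(N+1+j)) Re φ_j(z) and φ_j²(z) = ((N+1)/(N+1+j)) Im φ_j(z), where φ_j(z) = z^j( (N+1+j)/(N+1) − 2 z^{N+1}\overline{(z^{N+1}−c)}/(1+|z^{N+1}−c|²) ). Then there exists ρ₀ > 0 such that for every 0 < ρ < ρ₀, the linear span of the family of functions θ ↦ φ₀(ρe^{iθ}), θ ↦ φ_k¹(ρe^{iθ}), θ ↦ φ_k²(ρe^{iθ}) (k ≥ 1) is dense in L²(0, 2π). Equivalently, if ψ ∈ L²(0,2π) satisfies ∫₀^{2π} ψ(θ)φ₀(ρe^{iθ})dθ = 0 and ∫₀^{2π} ψ(θ)φ_k^i(ρe^{iθ})dθ = 0 for all k ≥ 1 and i = 1,2, then ψ = 0 almost everywhere. -/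
/-!
On the circle `z = ρ e^{iθ}` let `G(θ)` be the common term
`2 z^{N+1} \overline{(z^{N+1} - c)} / (1 + |z^{N+1} - c|²)`, so that `φ₀ = 1 - Re G` and
`φ_k = ρ^k e^{ikθ} (A_k - G)` with `A_k = (N+1+k)/(N+1) ≥ 1`, while `|G| ≤ ρ^{N+1} ≤ 1/2`.
The orthogonality relations say `A_k ψ̂(-k) = (ψG)^(-k)` for `k ≥ 1` and `ψ̂(0) = Re (ψG)^(0)`,
hence `|ψ̂(-k)| ≤ |(ψG)^(-k)|` for all `k ≥ 0`; since `ψ` is real, `|ψ̂(k)| = |ψ̂(-k)|`.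
Parseval then gives `‖ψ‖² ≤ 2 ‖ψG‖² ≤ ‖ψ‖² / 2`, so `ψ = 0`.
-/

open intervalIntegral MeasureTheory Set Complex ComplexConjugate

open scoped Interval

theorem IntervalIntegrable.ofReal {f : ℝ → ℝ} {a b : ℝ} {μ : Measure ℝ}
    (hf : IntervalIntegrable f μ a b) : IntervalIntegrable (fun x => (f x : ℂ)) μ a b :=
  ⟨hf.1.ofReal, hf.2.ofReal⟩

theorem fourierCoeffOn_conj {a b : ℝ} (hab : a < b) (f : ℝ → ℂ) (n : ℤ) :
    fourierCoeffOn hab (fun x => conj (f x)) n = conj (fourierCoeffOn hab f (-n)) := by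
  rw [fourierCoeffOn_eq_integral, fourierCoeffOn_eq_integral, neg_neg, Complex.real_smul,
    Complex.real_smul, map_mul, Complex.conj_ofReal, ← intervalIntegral_conj]
  simp only [fourier_neg, smul_eq_mul, map_mul]

theorem norm_fourierCoeffOn_ofReal_neg {a b : ℝ} (hab : a < b) (ψ : ℝ → ℝ) (n : ℤ) :
    ‖fourierCoeffOn hab (fun x => (ψ x : ℂ)) (-n)‖ =
      ‖fourierCoeffOn hab (fun x => (ψ x : ℂ)) n‖ := by
  have h := fourierCoeffOn_conj hab (fun x => (ψ x : ℂ)) n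
  simp only [Complex.conj_ofReal] at h
  rw [h, Complex.norm_conj]

theorem integral_norm_sq_le_two_mul_of_norm_fourierCoeffOn_sq_le {a b : ℝ} (hab : a < b)
    {f g : ℝ → ℂ} (hf : MemLp f 2 (volume.restrict (Ioc a b)))
    (hg : MemLp g 2 (volume.restrict (Ioc a b)))
    (h : ∀ n, ‖fourierCoeffOn hab f n‖ ^ 2 ≤
      ‖fourierCoeffOn hab g n‖ ^ 2 + ‖fourierCoeffOn hab g (-n)‖ ^ 2) :
    ∫ x in a..b, ‖f x‖ ^ 2 ≤ 2 * ∫ x in a..b, ‖g x‖ ^ 2 := by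
  have hg' := hasSum_sq_fourierCoeffOn hab hg
  have hsum := hasSum_le h (hasSum_sq_fourierCoeffOn hab hf)
    (hg'.add ((Equiv.neg ℤ).hasSum_iff.mpr hg'))
  have hba : 0 < (b - a)⁻¹ := inv_pos.mpr (sub_pos.mpr hab)
  simp only [smul_eq_mul] at hsum
  nlinarith

theorem ae_eq_zero_of_norm_fourierCoeffOn_le {a b : ℝ} (hab : a < b) {ψ : ℝ → ℝ} {G : ℝ → ℂ}
    {C : ℝ} (hψ : MemLp ψ 2 (volume.restrict (Ioc a b)))
    (hGm : AEStronglyMeasurable G (volume.restrict (Ioc a b)))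
    (hGC : ∀ᵐ x ∂volume.restrict (Ioc a b), ‖G x‖ ≤ C) (hC : 2 * C ^ 2 < 1)
    (hcoeff : ∀ n : ℤ, n ≤ 0 → ‖fourierCoeffOn hab (fun x => (ψ x : ℂ)) n‖ ≤
      ‖fourierCoeffOn hab (fun x => ψ x * G x) n‖) :
    ψ =ᵐ[volume.restrict (Ioc a b)] 0 := by
  set μ := volume.restrict (Ioc a b)
  have hf : MemLp (fun x => (ψ x : ℂ)) 2 μ := hψ.ofReal
  have hg : MemLp (fun x => ψ x * G x) 2 μ := (memLp_top_of_bound hGm C hGC).mul' hf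
  have hcoeff_sq : ∀ n, ‖fourierCoeffOn hab (fun x => (ψ x : ℂ)) n‖ ^ 2 ≤
      ‖fourierCoeffOn hab (fun x => ψ x * G x) n‖ ^ 2 +
        ‖fourierCoeffOn hab (fun x => ψ x * G x) (-n)‖ ^ 2 := by
    intro n
    rcases le_total n 0 with hn | hn
    · have := pow_le_pow_left₀ (norm_nonneg _) (hcoeff n hn) 2
      linarith [sq_nonneg ‖fourierCoeffOn hab (fun x => ψ x * G x) (-n)‖]
    · have := pow_le_pow_left₀ (norm_nonneg _) (hcoeff (-n) (by omega)) 2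
      rw [norm_fourierCoeffOn_ofReal_neg] at this
      linarith [sq_nonneg ‖fourierCoeffOn hab (fun x => ψ x * G x) n‖]
  have hparseval := integral_norm_sq_le_two_mul_of_norm_fourierCoeffOn_sq_le hab hf hg hcoeff_sq
  have hsq : Integrable (fun x => ψ x ^ 2) μ := hψ.integrable_sq
  have hbound : ∫ x in a..b, ‖(ψ x : ℂ) * G x‖ ^ 2 ≤ C ^ 2 * ∫ x in a..b, ‖(ψ x : ℂ)‖ ^ 2 := by
    simp only [integral_of_le hab.le, ← MeasureTheory.integral_const_mul]
    refine MeasureTheory.integral_mono_ae ((memLp_two_iff_integrable_sq_norm hg.1).mp hg) ?_ ?_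
    · exact ((memLp_two_iff_integrable_sq_norm hf.1).mp hf).const_mul _
    · filter_upwards [hGC] with x hx
      rw [norm_mul, mul_pow, mul_comm]
      gcongr
  have hzero : ∫ x in a..b, ψ x ^ 2 = 0 := by
    have hnonneg : 0 ≤ ∫ x in a..b, ψ x ^ 2 := integral_nonneg hab.le fun x _ => sq_nonneg _
    simp only [Complex.norm_real, Real.norm_eq_abs, sq_abs, norm_mul] at hparseval hbound
    nlinarith
  rw [integral_of_le hab.le, integral_eq_zero_iff_of_nonneg (fun x => sq_nonneg _) hsq] at hzero
  filter_upwards [hzero] with x hx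
  simpa using hx

theorem fourierCoeffOn_two_pi_neg_natCast (f : ℝ → ℂ) (k : ℕ) :
    fourierCoeffOn Real.two_pi_pos f (-k) =
      (2 * Real.pi)⁻¹ • ∫ θ in 0..(2 * Real.pi), exp (I * θ) ^ k * f θ := by
  rw [fourierCoeffOn_eq_integral, sub_zero, one_div]
  congr 1
  refine integral_congr fun θ _ => ?_
  rw [neg_neg, fourier_coe_apply, smul_eq_mul, ← Complex.exp_nat_mul]
  congr 2
  push_cast
  field_simp

theorem intervalIntegral_ofReal_mul_eq_zero {a b : ℝ} {ψ : ℝ → ℝ} {u : ℝ → ℂ}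
    (hu : IntervalIntegrable (fun x => (ψ x : ℂ) * u x) volume a b)
    (hre : ∫ x in a..b, ψ x * (u x).re = 0) (him : ∫ x in a..b, ψ x * (u x).im = 0) :
    ∫ x in a..b, (ψ x : ℂ) * u x = 0 := by
  apply Complex.ext
  · have h := intervalIntegral_re hu
    simp only [RCLike.re_to_complex, Complex.re_ofReal_mul] at h
    rw [← h, hre, Complex.zero_re]
  · have h := intervalIntegral_im hu
    simp only [RCLike.im_to_complex, Complex.im_ofReal_mul] at h
    rw [← h, him, Complex.zero_im]

theorem norm_integral_ofReal_le_of_integral_mul_one_sub_re_eq_zero {a b : ℝ} {ψ : ℝ → ℝ}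
    {G : ℝ → ℂ} (hψ : IntervalIntegrable ψ volume a b) (hG : ContinuousOn G [[a, b]])
    (h : ∫ x in a..b, ψ x * (1 - (G x).re) = 0) :
    ‖∫ x in a..b, (ψ x : ℂ)‖ ≤ ‖∫ x in a..b, (ψ x : ℂ) * G x‖ := by
  have hψG : IntervalIntegrable (fun x => (ψ x : ℂ) * G x) volume a b :=
    hψ.ofReal.mul_continuousOn hG
  have hψReG : IntervalIntegrable (fun x => ψ x * (G x).re) volume a b :=
    hψ.mul_continuousOn (Complex.continuous_re.comp_continuousOn hG)
  have hre : ∫ x in a..b, ψ x = (∫ x in a..b, (ψ x : ℂ) * G x).re := by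
    have hreG := intervalIntegral_re hψG
    simp only [RCLike.re_to_complex, Complex.re_ofReal_mul] at hreG
    simp only [mul_sub, mul_one] at h
    rw [← hreG, ← sub_eq_zero, ← integral_sub hψ hψReG, h]
  rw [intervalIntegral.integral_ofReal, Complex.norm_real, Real.norm_eq_abs, hre]
  exact Complex.abs_re_le_norm _

theorem norm_integral_le_of_integral_mul_sub_eq_zero {a b : ℝ} {ψ : ℝ → ℝ} {E G : ℝ → ℂ}
    {A r : ℂ} (hψ : IntervalIntegrable ψ volume a b) (hE : ContinuousOn E [[a, b]])
    (hG : ContinuousOn G [[a, b]]) (hr : r ≠ 0) (hA : 1 ≤ ‖A‖)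
    (hre : ∫ x in a..b, ψ x * (r * E x * (A - G x)).re = 0)
    (him : ∫ x in a..b, ψ x * (r * E x * (A - G x)).im = 0) :
    ‖∫ x in a..b, E x * ψ x‖ ≤ ‖∫ x in a..b, E x * (ψ x * G x)‖ := by
  have hEψ : IntervalIntegrable (fun x => E x * ψ x) volume a b :=
    hψ.ofReal.continuousOn_mul hE
  have hEψG : IntervalIntegrable (fun x => E x * (ψ x * G x)) volume a b :=
    (hψ.ofReal.mul_continuousOn hG).continuousOn_mul hE
  have h : ∫ x in a..b, (ψ x : ℂ) * (r * E x * (A - G x)) = 0 :=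
    intervalIntegral_ofReal_mul_eq_zero
      (hψ.ofReal.mul_continuousOn ((continuousOn_const.mul hE).mul (continuousOn_const.sub hG)))
      hre him
  have hfactor : ∀ x, (ψ x : ℂ) * (r * E x * (A - G x)) =
      r * (A * (E x * ψ x) - E x * (ψ x * G x)) := fun x => by ring
  have hA_mul : A * ∫ x in a..b, E x * ψ x = ∫ x in a..b, E x * (ψ x * G x) := by
    simp only [hfactor, intervalIntegral.integral_const_mul, integral_sub (hEψ.const_mul A) hEψG,
      mul_eq_zero, sub_eq_zero] at h
    exact h.resolve_left hr
  calc ‖∫ x in a..b, E x * ψ x‖ ≤ ‖A‖ * ‖∫ x in a..b, E x * ψ x‖ :=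
        le_mul_of_one_le_left (norm_nonneg _) hA
    _ = ‖∫ x in a..b, E x * (ψ x * G x)‖ := by rw [← norm_mul, hA_mul]

theorem one_le_norm_natCast_add_div (N k : ℕ) : 1 ≤ ‖((N : ℂ) + 1 + k) / ((N : ℂ) + 1)‖ := by
  rw [show ((N : ℂ) + 1 + k) / ((N : ℂ) + 1) = (((N + 1 + k : ℝ) / (N + 1) : ℝ) : ℂ) by
      push_cast; rfl, Complex.norm_real, Real.norm_of_nonneg (by positivity),
    one_le_div (by positivity)]
  exact le_add_of_nonneg_right k.cast_nonneg

noncomputable def correctionTerm (c : ℂ) (N : ℕ) (z : ℂ) : ℂ :=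
  2 * z ^ (N + 1) * conj (z ^ (N + 1) - c) / ((1 + ‖z ^ (N + 1) - c‖ ^ 2 : ℝ) : ℂ)

theorem norm_correctionTerm_le (c : ℂ) (N : ℕ) (z : ℂ) :
    ‖correctionTerm c N z‖ ≤ ‖z‖ ^ (N + 1) := by
  set t := ‖z ^ (N + 1) - c‖
  have ht : 2 * t ≤ 1 + t ^ 2 := by nlinarith [sq_nonneg (t - 1)]
  simp only [correctionTerm, norm_div, norm_mul, norm_pow, Complex.norm_conj, Complex.norm_real,
    Real.norm_eq_abs, RCLike.norm_ofNat]
  rw [abs_of_pos (by positivity), div_le_iff₀ (by positivity)]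
  nlinarith [pow_nonneg (norm_nonneg z) (N + 1)]

theorem continuous_correctionTerm (c : ℂ) (N : ℕ) : Continuous (correctionTerm c N) := by
  unfold correctionTerm
  refine Continuous.div (by fun_prop) (by fun_prop) fun z => ?_
  exact_mod_cast (by positivity : (1 + ‖z ^ (N + 1) - c‖ ^ 2 : ℝ) ≠ 0)

theorem norm_correctionTerm_ofReal_mul_exp_le (c : ℂ) (N : ℕ) {ρ : ℝ} (hρ : 0 ≤ ρ)
    (hρ1 : ρ ≤ 1) (θ : ℝ) : ‖correctionTerm c N (ρ * exp (I * θ))‖ ≤ ρ := by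
  refine (norm_correctionTerm_le c N _).trans ?_
  rw [norm_mul, Complex.norm_real, Real.norm_of_nonneg hρ, mul_comm I,
    Complex.norm_exp_ofReal_mul_I, mul_one]
  exact pow_le_of_le_one hρ hρ1 N.succ_ne_zero

/-- Completeness of the family `{φ₀, φ_k¹, φ_k² : k ≥ 1}` restricted to small circles:
for `ρ` small, any `ψ ∈ L²(0,2π)` that is orthogonal to all the functions
`θ ↦ φ₀(ρe^{iθ})`, `θ ↦ φ_k¹(ρe^{iθ})`, `θ ↦ φ_k²(ρe^{iθ})` vanishes a.e.;
equivalently, their span is dense in `L²(0,2π)`. -/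
theorem circle_restrictions_complete (c : ℂ) (N : ℕ)
    (φ₀ : ℂ → ℝ)
    (hφ₀ : ∀ z : ℂ, φ₀ z = (1 - 2 * z ^ (N + 1) * (starRingEnd ℂ) (z ^ (N + 1) - c) /
      (((1 + ‖z ^ (N + 1) - c‖ ^ 2 : ℝ)) : ℂ)).re)
    (φ : ℕ → ℂ → ℂ)
    (hφ : ∀ (j : ℕ) (z : ℂ), φ j z = z ^ j * (((N : ℂ) + 1 + j) / ((N : ℂ) + 1) -
      2 * z ^ (N + 1) * (starRingEnd ℂ) (z ^ (N + 1) - c) /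
        (((1 + ‖z ^ (N + 1) - c‖ ^ 2 : ℝ)) : ℂ)))
    (φ1 φ2 : ℕ → ℂ → ℝ)
    (hφ1 : ∀ (j : ℕ) (z : ℂ), φ1 j z = (((N : ℝ) + 1) / ((N : ℝ) + 1 + j)) * (φ j z).re)
    (hφ2 : ∀ (j : ℕ) (z : ℂ), φ2 j z = (((N : ℝ) + 1) / ((N : ℝ) + 1 + j)) * (φ j z).im) :
    ∃ ρ₀ > (0 : ℝ), ∀ ρ : ℝ, 0 < ρ → ρ < ρ₀ →
      ∀ ψ : ℝ → ℝ,
        MemLp ψ 2 (volume.restrict (Set.Ioo (0 : ℝ) (2 * Real.pi))) →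
        (∫ θ in (0 : ℝ)..(2 * Real.pi),
            ψ θ * φ₀ ((ρ : ℂ) * Complex.exp (Complex.I * θ))) = 0 →
        (∀ k : ℕ, 1 ≤ k →
          (∫ θ in (0 : ℝ)..(2 * Real.pi),
              ψ θ * φ1 k ((ρ : ℂ) * Complex.exp (Complex.I * θ))) = 0 ∧
          (∫ θ in (0 : ℝ)..(2 * Real.pi),
              ψ θ * φ2 k ((ρ : ℂ) * Complex.exp (Complex.I * θ))) = 0) →
        ∀ᵐ θ ∂(volume.restrict (Set.Ioo (0 : ℝ) (2 * Real.pi))), ψ θ = 0 := by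
  refine ⟨1 / 2, one_half_pos, fun ρ hρ hρ2 ψ hψ h0 hk => ?_⟩
  rw [Measure.restrict_congr_set Ioo_ae_eq_Ioc] at hψ ⊢
  set G : ℝ → ℂ := fun θ => correctionTerm c N (ρ * exp (I * θ))
  have hG : Continuous G := (continuous_correctionTerm c N).comp (by fun_prop)
  have hG_le : ∀ θ, ‖G θ‖ ≤ 1 / 2 := fun θ =>
    (norm_correctionTerm_ofReal_mul_exp_le c N hρ.le (by linarith) θ).trans hρ2.le
  have hψi : IntervalIntegrable ψ volume 0 (2 * Real.pi) :=
    (intervalIntegrable_iff_integrableOn_Ioc_of_le Real.two_pi_pos.le).mpr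
      (hψ.integrable one_le_two)
  refine ae_eq_zero_of_norm_fourierCoeffOn_le Real.two_pi_pos hψ hG.aestronglyMeasurable
    (ae_of_all _ hG_le) (by norm_num) fun n hn => ?_
  obtain ⟨k, rfl⟩ := Int.exists_eq_neg_ofNat hn
  simp only [fourierCoeffOn_two_pi_neg_natCast, norm_smul]
  refine mul_le_mul_of_nonneg_left ?_ (norm_nonneg _)
  rcases k.eq_zero_or_pos with rfl | hk1
  · have hφ₀_eq : ∀ z, φ₀ z = 1 - (correctionTerm c N z).re := fun z => by
      rw [hφ₀, Complex.sub_re, Complex.one_re, correctionTerm]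
    simp only [pow_zero, one_mul]
    exact norm_integral_ofReal_le_of_integral_mul_one_sub_re_eq_zero hψi hG.continuousOn
      (by simpa only [hφ₀_eq] using h0)
  · have hφ_eq : ∀ z, φ k z =
        z ^ k * (((N : ℂ) + 1 + k) / ((N : ℂ) + 1) - correctionTerm c N z) := hφ k
    have hs : ((N : ℝ) + 1) / ((N : ℝ) + 1 + k) ≠ 0 := by positivity
    obtain ⟨h1, h2⟩ := hk k hk1
    simp only [hφ1, hφ2, mul_left_comm (ψ _), intervalIntegral.integral_const_mul, mul_eq_zero, hs,
      false_or, hφ_eq, mul_pow] at h1 h2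
    have hE : Continuous fun θ : ℝ => exp (I * θ) ^ k := by fun_prop
    exact norm_integral_le_of_integral_mul_sub_eq_zero hψi hE.continuousOn hG.continuousOn
      (pow_ne_zero k (ofReal_ne_zero.mpr hρ.ne')) (one_le_norm_natCast_add_div N k) h1 h2
end

section
/- Let c ∈ ℂ, N ∈ ℕ, k ∈ ℕ, and φ_k(z) = z^k( (N+1+k)/(N+1) − 2 z^{N+1}\overline{(z^{N+1}−c)}/(1+|z^{N+1}−c|²) ). There exist constants C > 0 and R₀ > 0 such that for all z with |z| ≥ R₀, | φ_k(z) − ((k−N−1)/(N+1)) z^k | ≤ C |z|^{k−N−1}. -/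
/-!
Put `w = z ^ (N + 1)` and `u = w - c`. The two coefficients of `z ^ k` differ by exactly `2`, so
`φ z - ((k - N - 1) / (N + 1)) z ^ k = 2 z ^ k (1 - w ū / (1 + |u|²))`, and since `w = u + c` the
numerator collapses to `1 - c ū`. Hence the bracket is `O(1 / |u|) = O(1 / |w|) = O(|z| ^ (-(N + 1)))`.
-/

open ComplexConjugate

namespace Complex

lemma one_sub_add_mul_conj_div (u c : ℂ) :
    1 - (u + c) * conj u / ((1 + ‖u‖ ^ 2 : ℝ) : ℂ) = (1 - c * conj u) / ((1 + ‖u‖ ^ 2 : ℝ) : ℂ) := by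
  have hD : ((1 + ‖u‖ ^ 2 : ℝ) : ℂ) ≠ 0 := ofReal_ne_zero.mpr (by positivity)
  field_simp
  push_cast
  rw [add_mul, mul_conj']
  ring

lemma norm_one_sub_mul_conj_div_le (u c : ℂ) (hu : u ≠ 0) :
    ‖(1 - c * conj u) / ((1 + ‖u‖ ^ 2 : ℝ) : ℂ)‖ ≤ (1 + ‖c‖) / ‖u‖ := by
  have hu' : 0 < ‖u‖ := norm_pos_iff.mpr hu
  have hnum : ‖1 - c * conj u‖ ≤ 1 + ‖c‖ * ‖u‖ := by
    simpa [norm_conj] using norm_sub_le (1 : ℂ) (c * conj u)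
  rw [norm_div, norm_real, Real.norm_of_nonneg (by positivity), div_le_div_iff₀ (by positivity) hu']
  -- `(1 + |c| t) t ≤ (1 + |c|)(1 + t²)` reduces to `t ≤ 1 + t²`
  nlinarith [norm_nonneg c, sq_nonneg (‖u‖ - 1), mul_nonneg (norm_nonneg c) (sq_nonneg ‖u‖)]

lemma norm_one_sub_mul_conj_sub_div_le {w c : ℂ} (hw : 2 * ‖c‖ < ‖w‖) :
    ‖1 - w * conj (w - c) / ((1 + ‖w - c‖ ^ 2 : ℝ) : ℂ)‖ ≤ 2 * (1 + ‖c‖) / ‖w‖ := by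
  have hwc : ‖w‖ / 2 < ‖w - c‖ := by linarith [norm_sub_norm_le w c]
  have hu : w - c ≠ 0 := norm_pos_iff.mp (by linarith [norm_nonneg c])
  calc ‖1 - w * conj (w - c) / ((1 + ‖w - c‖ ^ 2 : ℝ) : ℂ)‖
      = ‖(1 - c * conj (w - c)) / ((1 + ‖w - c‖ ^ 2 : ℝ) : ℂ)‖ := by
        rw [← one_sub_add_mul_conj_div, sub_add_cancel]
    _ ≤ (1 + ‖c‖) / ‖w - c‖ := norm_one_sub_mul_conj_div_le _ _ hu
    _ ≤ (1 + ‖c‖) / (‖w‖ / 2) := by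
        gcongr
        linarith [norm_nonneg c]
    _ = 2 * (1 + ‖c‖) / ‖w‖ := by ring

end Complex

/-- Asymptotics of `φ_k` at infinity:
`φ_k(z) = ((k-N-1)/(N+1)) z^k + O(|z|^{k-N-1})` as `|z| → ∞`. -/
theorem phi_k_asymptotics (c : ℂ) (N k : ℕ)
    (φ : ℂ → ℂ)
    (hφ : ∀ z : ℂ, φ z = z ^ k * (((N : ℂ) + 1 + k) / ((N : ℂ) + 1) -
      2 * z ^ (N + 1) * (starRingEnd ℂ) (z ^ (N + 1) - c) /
        (((1 + ‖z ^ (N + 1) - c‖ ^ 2 : ℝ)) : ℂ))) :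
    ∃ C > (0 : ℝ), ∃ R₀ > (0 : ℝ), ∀ z : ℂ, R₀ ≤ ‖z‖ →
      ‖φ z - (((k : ℂ) - N - 1) / ((N : ℂ) + 1)) * z ^ k‖
        ≤ C * ‖z‖ ^ ((k : ℤ) - N - 1) := by
  refine ⟨4 * (1 + ‖c‖), by positivity, 1 + 2 * ‖c‖, by positivity, fun z hz => ?_⟩
  set w := z ^ (N + 1)
  have hz : 1 ≤ ‖z‖ := by linarith [norm_nonneg c]
  have hzw : ‖z‖ ≤ ‖w‖ := by
    rw [norm_pow]
    exact le_self_pow₀ hz N.succ_ne_zero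
  have hw : 2 * ‖c‖ < ‖w‖ := by linarith
  have hsplit : φ z - (((k : ℂ) - N - 1) / ((N : ℂ) + 1)) * z ^ k =
      2 * z ^ k * (1 - w * conj (w - c) / ((1 + ‖w - c‖ ^ 2 : ℝ) : ℂ)) := by
    rw [hφ z]
    field_simp
    ring
  have hzpow : ‖z‖ ^ ((k : ℤ) - N - 1) = ‖z‖ ^ k / ‖w‖ := by
    rw [norm_pow, show (k : ℤ) - N - 1 = k - (N + 1 : ℕ) by push_cast; ring,
      zpow_sub₀ (by positivity), zpow_natCast, zpow_natCast]
  rw [hsplit, hzpow, norm_mul, norm_mul, norm_pow, Complex.norm_ofNat]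
  calc 2 * ‖z‖ ^ k * ‖1 - w * conj (w - c) / ((1 + ‖w - c‖ ^ 2 : ℝ) : ℂ)‖
      ≤ 2 * ‖z‖ ^ k * (2 * (1 + ‖c‖) / ‖w‖) := by
        gcongr
        exact Complex.norm_one_sub_mul_conj_sub_div_le hw
    _ = 4 * (1 + ‖c‖) * (‖z‖ ^ k / ‖w‖) := by ring
end

section
/- Let c ∈ ℂ, N ∈ ℕ, and for k ∈ ℕ set φ_k(z) = z^k( (N+1+k)/(N+1) − 2 z^{N+1}\overline{(z^{N+1}−c)}/(1+|z^{N+1}−c|²) ). Then φ_k is bounded on ℂ if and only if k = 0 or k = N+1. In particular, for every k ≥ 1 with k ≠ N+1 the function φ_k is unbounded on ℂ. -/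
/-!
With `w = z ^ (N + 1) - c` one has `z ^ (N + 1) * conj w = ‖w‖ ^ 2 + c * conj w`, so
`φ_k z = z ^ k * ((k - (N + 1)) / (N + 1) + g w)` with `g w = 2 (1 - c conj w) / (1 + ‖w‖ ^ 2)`.
The correction `g = correction c` is bounded and decays like `1 / ‖w‖`, while `(w + c) * g w`
stays bounded. Hence `φ_0 = -1 + g` and `φ_{N+1} = (w + c) * g w` are bounded, whereas for
any other `k ≥ 1` the bracket tends to a nonzero constant and `z ^ k` drives `‖φ_k‖` to infinity.
-/

open Complex ComplexConjugate Filter Bornology Topology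

noncomputable def correction (c w : ℂ) : ℂ :=
  2 * (1 - c * conj w) / ((1 + ‖w‖ ^ 2 : ℝ) : ℂ)

lemma ofReal_one_add_norm_sq_ne_zero (w : ℂ) : ((1 + ‖w‖ ^ 2 : ℝ) : ℂ) ≠ 0 := by
  exact_mod_cast (by positivity : (1 + ‖w‖ ^ 2 : ℝ) ≠ 0)

lemma two_mul_mul_conj_sub_div (c p : ℂ) :
    2 * p * conj (p - c) / ((1 + ‖p - c‖ ^ 2 : ℝ) : ℂ) = 2 - correction c (p - c) := by
  have hD : ((1 + ‖p - c‖ ^ 2 : ℝ) : ℂ) = 1 + (p - c) * conj (p - c) := by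
    rw [Complex.sq_norm]; push_cast; rw [Complex.mul_conj]
  rw [correction, eq_sub_iff_add_eq, ← add_div,
    div_eq_iff (ofReal_one_add_norm_sq_ne_zero _), hD]
  ring

lemma phi_expr_eq_pow_mul_correction (c : ℂ) (N k : ℕ) (z : ℂ) :
    z ^ k * (((N : ℂ) + 1 + k) / ((N : ℂ) + 1) -
      2 * z ^ (N + 1) * conj (z ^ (N + 1) - c) / (((1 + ‖z ^ (N + 1) - c‖ ^ 2 : ℝ)) : ℂ)) =
    z ^ k * (((k : ℂ) - (N + 1)) / (N + 1) + correction c (z ^ (N + 1) - c)) := by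
  have hN : (N : ℂ) + 1 ≠ 0 := by exact_mod_cast N.succ_ne_zero
  rw [two_mul_mul_conj_sub_div]
  field_simp
  ring

lemma norm_correction_le (c w : ℂ) :
    ‖correction c w‖ ≤ 2 * (1 + ‖c‖ * ‖w‖) / (1 + ‖w‖ ^ 2) := by
  rw [correction, norm_div, norm_mul, norm_real, Real.norm_of_nonneg (by positivity),
    Complex.norm_two]
  gcongr
  calc ‖1 - c * conj w‖ ≤ ‖(1 : ℂ)‖ + ‖c * conj w‖ := norm_sub_le _ _
    _ = 1 + ‖c‖ * ‖w‖ := by simp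

lemma norm_correction_le_two_add (c w : ℂ) : ‖correction c w‖ ≤ 2 + ‖c‖ := by
  refine (norm_correction_le c w).trans ?_
  rw [div_le_iff₀ (by positivity)]
  nlinarith [norm_nonneg c, norm_nonneg w, mul_nonneg (norm_nonneg c) (sq_nonneg (‖w‖ - 1))]

lemma norm_add_mul_correction_le (c w : ℂ) :
    ‖(w + c) * correction c w‖ ≤ 2 * (1 + ‖c‖) ^ 2 := by
  have ha := norm_nonneg c
  have ht := norm_nonneg w
  calc ‖(w + c) * correction c w‖
      ≤ (‖w‖ + ‖c‖) * (2 * (1 + ‖c‖ * ‖w‖) / (1 + ‖w‖ ^ 2)) := by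
        rw [norm_mul]; gcongr; exacts [norm_add_le _ _, norm_correction_le c w]
    _ ≤ 2 * (1 + ‖c‖) ^ 2 := by
        rw [mul_div_assoc', div_le_iff₀ (by positivity)]
        nlinarith [sq_nonneg (‖w‖ - 1), mul_nonneg ha (sq_nonneg (‖w‖ - 1)),
          mul_nonneg (mul_nonneg ha ha) (sq_nonneg (‖w‖ - 1))]

lemma norm_correction_le_div (c : ℂ) {w : ℂ} (hw : 1 ≤ ‖w‖) :
    ‖correction c w‖ ≤ 2 * (1 + ‖c‖) / ‖w‖ := by
  refine (norm_correction_le c w).trans ?_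
  rw [div_le_div_iff₀ (by positivity) (by positivity)]
  nlinarith [norm_nonneg c, mul_le_mul_of_nonneg_left hw (norm_nonneg c)]

lemma tendsto_correction_cobounded (c : ℂ) :
    Tendsto (correction c) (cobounded ℂ) (𝓝 0) := by
  refine squeeze_zero_norm' ?_
    ((tendsto_const_nhds (x := 2 * (1 + ‖c‖))).div_atTop (tendsto_norm_cobounded_atTop (E := ℂ)))
  filter_upwards [tendsto_norm_cobounded_atTop.eventually_ge_atTop 1] with w hw
  exact norm_correction_le_div c hw

lemma tendsto_norm_pow_mul_atTop {𝕜 : Type*} [NormedField 𝕜] {f : 𝕜 → 𝕜} {L : 𝕜} {k : ℕ}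
    (hk : k ≠ 0) (hL : L ≠ 0) (hf : Tendsto f (cobounded 𝕜) (𝓝 L)) :
    Tendsto (fun z ↦ ‖z ^ k * f z‖) (cobounded 𝕜) atTop := by
  simp only [norm_mul, norm_pow]
  exact ((tendsto_pow_atTop hk).comp tendsto_norm_cobounded_atTop).atTop_mul_pos
    (norm_pos_iff.2 hL) hf.norm

/-- The function `φ_k` is bounded on `ℂ` if and only if `k = 0` or `k = N+1`;
in particular, for every `k ≥ 1` with `k ≠ N+1`, `φ_k` is unbounded. -/
theorem phi_k_bounded_iff (c : ℂ) (N k : ℕ)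
    (φ : ℂ → ℂ)
    (hφ : ∀ z : ℂ, φ z = z ^ k * (((N : ℂ) + 1 + k) / ((N : ℂ) + 1) -
      2 * z ^ (N + 1) * (starRingEnd ℂ) (z ^ (N + 1) - c) /
        (((1 + ‖z ^ (N + 1) - c‖ ^ 2 : ℝ)) : ℂ))) :
    ((∃ M : ℝ, ∀ z : ℂ, ‖φ z‖ ≤ M) ↔ (k = 0 ∨ k = N + 1)) ∧
    (1 ≤ k → k ≠ N + 1 → ¬ ∃ M : ℝ, ∀ z : ℂ, ‖φ z‖ ≤ M) := by
  simp only [phi_expr_eq_pow_mul_correction] at hφ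
  have unbounded (hk : 1 ≤ k) (hkN : k ≠ N + 1) : ¬ ∃ M : ℝ, ∀ z : ℂ, ‖φ z‖ ≤ M := by
    rintro ⟨M, hM⟩
    have hL : ((k : ℂ) - (N + 1)) / (N + 1) ≠ 0 :=
      div_ne_zero (sub_ne_zero.2 (by exact_mod_cast hkN)) (by exact_mod_cast N.succ_ne_zero)
    have hbracket :
        Tendsto (fun z ↦ ((k : ℂ) - (N + 1)) / (N + 1) + correction c (z ^ (N + 1) - c))
          (cobounded ℂ) (𝓝 (((k : ℂ) - (N + 1)) / (N + 1))) := by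
      simpa using ((tendsto_correction_cobounded c).comp <| (tendsto_sub_const_cobounded c).comp <|
        tendsto_pow_cobounded_cobounded N.succ_ne_zero).const_add (((k : ℂ) - (N + 1)) / (N + 1))
    have hlim := tendsto_norm_pow_mul_atTop (Nat.one_le_iff_ne_zero.1 hk) hL hbracket
    obtain ⟨z, hz⟩ := (hlim.eventually_gt_atTop M).exists
    exact (hM z).not_gt (by simpa [hφ] using hz)
  refine ⟨⟨fun hbdd ↦ ?_, ?_⟩, unbounded⟩
  · by_contra! h
    exact unbounded (by omega) h.2 hbdd
  · rintro (rfl | rfl)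
    · refine ⟨1 + (2 + ‖c‖), fun z ↦ ?_⟩
      have hN : (N : ℂ) + 1 ≠ 0 := by exact_mod_cast N.succ_ne_zero
      rw [hφ, pow_zero, one_mul, Nat.cast_zero, zero_sub, neg_div, div_self hN]
      exact (norm_add_le _ _).trans (by simpa using norm_correction_le_two_add c _)
    · refine ⟨2 * (1 + ‖c‖) ^ 2, fun z ↦ ?_⟩
      simpa [hφ] using norm_add_mul_correction_le c (z ^ (N + 1) - c)
end
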